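/- arXiv:1305.1095 — 7 statements merged into one kernel-verified Lean document; each statement's English description precedes it below -/
import Mathlib

section
/- Let a : ℝ → ℝ be bounded and log-Zygmund: there is K such that |a(t+τ)+a(t-τ)-2a(t)| ≤ K τ log(1+1/τ) for all t ∈ ℝ and 0<τ<1. Then there exists C, depending only on the LZ norm of a, such that for all γ ≥ 1 and all 0<|τ|<1, sup_t |a(t+τ) - a(t)| ≤ C |τ| log²(1+γ+1/|τ|). -/
lemma lz_dyadic (M K : ℝ) (hM : 0 ≤ M) (hK : 0 ≤ K) (a : ℝ → ℝ)
    (ha : ∀ t, |a t| ≤ M)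
    (hz : ∀ t τ : ℝ, 0 < τ → τ < 1 →
      |a (t + τ) + a (t - τ) - 2 * a t| ≤ K * (τ * Real.log (1 + 1 / τ))) :
    ∀ n : ℕ, ∀ σ : ℝ, 0 < σ → (∀ j < n, (2:ℝ)^j * σ < 1) →
      ∀ t, |a (t + σ) - a t| ≤ 2*M/2^n + K*σ/2 * n * Real.log (1 + 1/σ) := by
  intro n
  induction n with
  | zero =>
    intro σ hσ _ t
    simp only [Nat.cast_zero, pow_zero, mul_zero, zero_mul, add_zero]
    calc |a (t + σ) - a t| ≤ |a (t+σ)| + |a t| := abs_sub _ _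
      _ ≤ M + M := add_le_add (ha _) (ha _)
      _ = 2*M/1 := by ring
  | succ n ih =>
    intro σ hσ hsmall t
    have hσ1 : σ < 1 := by have := hsmall 0 (by omega); simpa using this
    have hlogpos : 0 ≤ Real.log (1 + 1/σ) := by
      apply Real.log_nonneg; nlinarith [one_div_pos.mpr hσ]
    have hz1 := hz (t + σ) σ hσ hσ1
    have e1 : t + σ + σ = t + 2*σ := by ring
    have e2 : t + σ - σ = t := by ring
    rw [e1, e2] at hz1
    have h2σ : ∀ j < n, (2:ℝ)^j * (2*σ) < 1 := by
      intro j hj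
      have := hsmall (j+1) (by omega)
      calc (2:ℝ)^j * (2*σ) = 2^(j+1) * σ := by ring
        _ < 1 := this
    have ih2 := ih (2*σ) (by linarith) h2σ t
    have hmono : Real.log (1 + 1/(2*σ)) ≤ Real.log (1 + 1/σ) := by
      apply Real.log_le_log (by positivity)
      have : 1/(2*σ) ≤ 1/σ := by
        apply one_div_le_one_div_of_le hσ; linarith
      linarith
    have key : 2 * |a (t + σ) - a t| ≤ |a (t + 2*σ) - a t| + K*(σ*Real.log (1+1/σ)) := by
      have : 2 * (a (t+σ) - a t) = (a (t+2*σ) - a t) - (a (t+2*σ) + a t - 2*a (t+σ)) := by ring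
      calc 2 * |a (t + σ) - a t| = |2 * (a (t+σ) - a t)| := by
            rw [abs_mul]; simp
        _ = |(a (t+2*σ) - a t) - (a (t+2*σ) + a t - 2*a (t+σ))| := by rw [this]
        _ ≤ |a (t+2*σ) - a t| + |a (t+2*σ) + a t - 2*a (t+σ)| := abs_sub _ _
        _ ≤ |a (t+2*σ) - a t| + K*(σ*Real.log (1+1/σ)) := by linarith [hz1]
    have hK2 : 0 ≤ K * (2*σ)/2 * n := by positivity
    have step2 : K*(2*σ)/2 * n * Real.log (1 + 1/(2*σ)) ≤ K*(2*σ)/2 * n * Real.log (1+1/σ) :=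
      mul_le_mul_of_nonneg_left hmono hK2
    have : 2 * |a (t + σ) - a t| ≤ 2*M/2^n + K*(2*σ)/2 * n * Real.log (1+1/σ)
        + K*(σ*Real.log (1+1/σ)) := by linarith
    have goal2 : 2*M/2^n + K*(2*σ)/2 * n * Real.log (1+1/σ) + K*(σ*Real.log (1+1/σ))
        = 2 * (2*M/2^(n+1) + K*σ/2 * (n+1) * Real.log (1+1/σ)) := by
      push_cast
      field_simp
      ring
    push_cast
    linarith [goal2 ▸ this]

/-- a bounded log-Zygmund function `a : ℝ → ℝ` satisfies
`|a(t+τ) - a(t)| ≤ C |τ| log²(1+γ+1/|τ|)` for all `γ ≥ 1` and `0 < |τ| < 1`,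
with `C` depending only on the log-Zygmund norm of `a` (i.e. on `M`, `K`). -/
theorem logZygmund_first_difference (M K : ℝ) (hM : 0 ≤ M) (hK : 0 ≤ K) :
    ∃ C > 0, ∀ a : ℝ → ℝ,
      (∀ t, |a t| ≤ M) →
      (∀ t τ : ℝ, 0 < τ → τ < 1 →
        |a (t + τ) + a (t - τ) - 2 * a t| ≤ K * (τ * Real.log (1 + 1 / τ))) →
      ∀ γ : ℝ, 1 ≤ γ → ∀ τ : ℝ, 0 < |τ| → |τ| < 1 → ∀ t : ℝ,
        |a (t + τ) - a t| ≤ C * (|τ| * (Real.log (1 + γ + 1 / |τ|)) ^ 2) := by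
  refine ⟨2*M + 2*K + 1, by positivity, ?_⟩
  intro a ha hz γ hγ τ hτ0 hτ1 t
  set σ := |τ| with hσdef
  have hσ : 0 < σ := hτ0
  have hσ1 : σ < 1 := hτ1
  have hinv : 1 < 1/σ := by rw [lt_div_iff₀ hσ]; linarith
  -- choose minimal n with 1/σ ≤ 2^n
  have hex : ∃ n : ℕ, 1/σ ≤ (2:ℝ)^n := by
    obtain ⟨n, hn⟩ := pow_unbounded_of_one_lt (1/σ) (by norm_num : (1:ℝ) < 2)
    exact ⟨n, le_of_lt hn⟩
  classical
  set n := Nat.find hex with hndef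
  have hspec : 1/σ ≤ (2:ℝ)^n := Nat.find_spec hex
  have hmin : ∀ j < n, ¬ (1/σ ≤ (2:ℝ)^j) := fun j hj => Nat.find_min hex hj
  have hn1 : 1 ≤ n := by
    by_contra h
    push_neg at h
    interval_cases n
    · have := hspec; simp at this; linarith
  have hsmall : ∀ j < n, (2:ℝ)^j * σ < 1 := by
    intro j hj
    have := hmin j hj
    push_neg at this
    calc (2:ℝ)^j * σ < (1/σ) * σ := by
          apply mul_lt_mul_of_pos_right this hσ
      _ = 1 := by field_simp
  set L := Real.log (1 + 1/σ) with hLdef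
  have hLlog2 : Real.log 2 ≤ L := by
    apply Real.log_le_log (by norm_num); linarith
  have hlog2 : (2:ℝ)/3 ≤ Real.log 2 := by
    have := Real.log_two_gt_d9; linarith
  have hL0 : 0 < L := by linarith
  -- n ≤ 3 L
  have hnL : (n:ℝ) ≤ 3 * L := by
    have hn1' := hmin (n-1) (by omega)
    push_neg at hn1'
    have hlogs : ((n:ℝ) - 1) * Real.log 2 ≤ L := by
      have h1 : Real.log ((2:ℝ)^(n-1)) ≤ Real.log (1/σ) :=
        Real.log_le_log (by positivity) (le_of_lt hn1')
      rw [Real.log_pow] at h1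
      have h2 : Real.log (1/σ) ≤ L := Real.log_le_log (by positivity) (by linarith)
      have hc : ((n-1 : ℕ) : ℝ) = (n:ℝ) - 1 := by
        push_cast [Nat.cast_sub hn1]; ring
      rw [hc] at h1
      linarith
    nlinarith
  -- 1/2^n ≤ σ
  have hpow : 2*M/2^n ≤ 2*M*σ := by
    have h1 : (1:ℝ)/2^n ≤ σ := by
      rw [div_le_iff₀ (by positivity)]
      rw [div_le_iff₀ hσ] at hspec
      linarith
    calc 2*M/2^n = 2*M * (1/2^n) := by ring
      _ ≤ 2*M*σ := by
        apply mul_le_mul_of_nonneg_left h1 (by linarith)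
  -- main dyadic estimate : |a(s+σ) - a s| ≤ 2Mσ + (3K/2) σ L²  for all s
  have main : ∀ s : ℝ, |a (s + σ) - a s| ≤ 2*M*σ + 3*K/2 * σ * L^2 := by
    intro s
    have h := lz_dyadic M K hM hK a ha hz n σ hσ hsmall s
    have h2 : K*σ/2 * n * L ≤ K*σ/2 * (3*L) * L := by
      apply mul_le_mul_of_nonneg_right _ (le_of_lt hL0)
      apply mul_le_mul_of_nonneg_left hnL (by positivity)
    calc |a (s + σ) - a s| ≤ 2*M/2^n + K*σ/2 * n * L := h
      _ ≤ 2*M*σ + 3*K/2 * σ * L^2 := by nlinarith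
  -- the big log
  set G := Real.log (1 + γ + 1/σ) with hGdef
  have hLG : L ≤ G := by
    apply Real.log_le_log (by positivity); linarith
  have hG1 : 1 ≤ G := by
    rw [hGdef, Real.le_log_iff_exp_le (by linarith)]
    have := Real.exp_one_lt_d9
    linarith
  have hG0 : 0 < G := by linarith
  have hbound : 2*M*σ + 3*K/2 * σ * L^2 ≤ (2*M + 2*K + 1) * (σ * G^2) := by
    have hL2G2 : L^2 ≤ G^2 := by nlinarith
    have h1 : (1:ℝ) ≤ G^2 := by nlinarith
    nlinarith [mul_le_mul_of_nonneg_left hL2G2 (by positivity : (0:ℝ) ≤ 3*K/2*σ),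
      mul_le_mul_of_nonneg_left h1 (by positivity : (0:ℝ) ≤ 2*M*σ),
      mul_nonneg (mul_nonneg hK hσ.le) (sq_nonneg G),
      mul_nonneg hσ.le (sq_nonneg G)]
  -- handle sign of τ
  rcases abs_cases τ with ⟨he, _⟩ | ⟨he, hneg⟩
  · have : t + τ = t + σ := by rw [hσdef, he]
    rw [this]
    exact le_trans (main t) hbound
  · have he2 : t = (t + τ) + σ := by rw [hσdef, he]; ring
    calc |a (t + τ) - a t| = |a ((t+τ) + σ) - a (t + τ)| := by
          rw [← he2, abs_sub_comm]
      _ ≤ 2*M*σ + 3*K/2 * σ * L^2 := main (t + τ)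
      _ ≤ _ := hbound
end

section
/- Let a : ℝ → ℝ be bounded log-Zygmund, ρ ∈ C_c^∞(ℝ) even, 0 ≤ ρ ≤ 1, supp ρ ⊆ [-1,1], ∫ρ = 1, and for ε ∈ (0,1] set a_ε(t) = ∫ ρ_ε(t-s) a(s) ds with ρ_ε(t) = ε^{-1} ρ(t/ε). Then there exists C, depending only on ‖a‖_{LZ}, such that for all γ ≥ 1, ε ∈ (0,1], t ∈ ℝ: |a_ε(t) - a(t)| ≤ C ε log(1+γ+1/ε). -/
open MeasureTheory

set_option maxHeartbeats 1000000 in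
/-- for a bounded log-Zygmund function `a` and the mollification
`a_ε = ρ_ε * a`, one has `|a_ε(t) - a(t)| ≤ C ε log(1+γ+1/ε)` for all `γ ≥ 1`,
`ε ∈ (0,1]`, with `C` depending only on the log-Zygmund norm of `a`. -/
theorem mollified_logZygmund_approx (ρ : ℝ → ℝ)
    (hρ_smooth : ContDiff ℝ (⊤ : ℕ∞) ρ) (hρ_even : ∀ s, ρ (-s) = ρ s)
    (hρ_nonneg : ∀ s, 0 ≤ ρ s) (hρ_le_one : ∀ s, ρ s ≤ 1)
    (hρ_supp : Function.support ρ ⊆ Set.Icc (-1 : ℝ) 1)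
    (hρ_int : ∫ s, ρ s = 1)
    (M K : ℝ) (hM : 0 ≤ M) (hK : 0 ≤ K) :
    ∃ C > 0, ∀ a : ℝ → ℝ, Measurable a →
      (∀ t, |a t| ≤ M) →
      (∀ t τ : ℝ, 0 < τ → τ < 1 →
        |a (t + τ) + a (t - τ) - 2 * a t| ≤ K * (τ * Real.log (1 + 1 / τ))) →
      ∀ γ : ℝ, 1 ≤ γ → ∀ ε : ℝ, 0 < ε → ε ≤ 1 → ∀ t : ℝ,
        |(∫ s, ε⁻¹ * ρ ((t - s) / ε) * a s) - a t|
          ≤ C * ε * Real.log (1 + γ + 1 / ε) := by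
  refine ⟨K + 1, by positivity, ?_⟩
  intro a ha hbound hzyg γ hγ ε hε hε1 t
  have hεne : ε ≠ 0 := ne_of_gt hε
  set L := Real.log (1 + γ + 1 / ε) with hLdef
  have hεinv : (1 : ℝ) ≤ 1 / ε := by
    rw [le_div_iff₀ hε]; linarith
  have hpos : (0 : ℝ) < 1 + γ + 1 / ε := by linarith
  have hL1 : 1 ≤ L := by
    rw [hLdef, Real.le_log_iff_exp_le hpos]
    calc Real.exp 1 ≤ 2.7182818286 := Real.exp_one_lt_d9.le
      _ ≤ 1 + γ + 1 / ε := by linarith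
  have hL0 : (0 : ℝ) ≤ L := by linarith
  -- ρ is continuous, compactly supported, integrable
  have hρc : Continuous ρ := hρ_smooth.continuous
  have hρcs : HasCompactSupport ρ :=
    HasCompactSupport.of_support_subset_isCompact isCompact_Icc hρ_supp
  have hρint : Integrable ρ := hρc.integrable_of_hasCompactSupport hρcs
  -- integrability of the mollified pieces
  have key_int : ∀ c d : ℝ, Integrable (fun u => ρ u * a (c + d * u)) := by
    intro c d
    refine (hρint.mul_const M).mono' ?_ (Filter.Eventually.of_forall fun u => ?_)
    · exact (hρc.measurable.mul
        (ha.comp (measurable_const.add (measurable_const.mul measurable_id)))).aestronglyMeasurable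
    · rw [Real.norm_eq_abs, abs_mul, abs_of_nonneg (hρ_nonneg u)]
      exact mul_le_mul_of_nonneg_left (hbound _) (hρ_nonneg u)
  have hint1 : Integrable (fun u => ρ u * a (t + ε * u)) := key_int t ε
  have hint2 : Integrable (fun u => ρ u * a (t - ε * u)) := by
    have h := key_int t (-ε)
    simpa [neg_mul, ← sub_eq_add_neg] using h
  have hint3 : Integrable (fun u => ρ u * a t) := hρint.mul_const _
  -- change of variables
  have hI : (∫ s, ε⁻¹ * ρ ((t - s) / ε) * a s) = ∫ u, ρ u * a (t - ε * u) := by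
    calc (∫ s, ε⁻¹ * ρ ((t - s) / ε) * a s)
        = ∫ s, ε⁻¹ • (fun x => ρ (x / ε) * a (t - ε * (x / ε))) (t - s) := by
          congr 1; funext s
          simp only [smul_eq_mul]
          have hts : t - ε * ((t - s) / ε) = s := by field_simp; ring
          rw [hts]; ring
      _ = ε⁻¹ • ∫ s, (fun x => ρ (x / ε) * a (t - ε * (x / ε))) (t - s) := integral_smul _ _
      _ = ε⁻¹ • ∫ x, ρ (x / ε) * a (t - ε * (x / ε)) := by
          rw [integral_sub_left_eq_self (fun x => ρ (x / ε) * a (t - ε * (x / ε))) volume t]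
      _ = ε⁻¹ • (|ε| • ∫ u, ρ u * a (t - ε * u)) := by
          rw [Measure.integral_comp_div (fun u => ρ u * a (t - ε * u)) ε]
      _ = ∫ u, ρ u * a (t - ε * u) := by
          rw [smul_smul, abs_of_pos hε, inv_mul_cancel₀ hεne, one_smul]
  -- evenness
  have hIeven : (∫ u, ρ u * a (t - ε * u)) = ∫ u, ρ u * a (t + ε * u) := by
    rw [← integral_neg_eq_self (fun u => ρ u * a (t + ε * u)) volume]
    congr 1; funext u
    rw [hρ_even u, show t + ε * -u = t - ε * u by ring]
  have hat : (∫ u, ρ u * a t) = a t := by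
    rw [integral_mul_const, hρ_int, one_mul]
  -- symmetrized identity
  have hJ : (∫ u, ρ u * (a (t + ε * u) + a (t - ε * u) - 2 * a t))
      = ((∫ u, ρ u * a (t - ε * u)) - a t) + ((∫ u, ρ u * a (t - ε * u)) - a t) := by
    have hsplit : (fun u => ρ u * (a (t + ε * u) + a (t - ε * u) - 2 * a t))
        = fun u => (ρ u * a (t + ε * u) + ρ u * a (t - ε * u)) - (2 : ℝ) * (ρ u * a t) := by
      funext u; ring
    have hadd : Integrable (fun u => ρ u * a (t + ε * u) + ρ u * a (t - ε * u)) :=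
      hint1.add hint2
    have h2h : Integrable (fun u => (2 : ℝ) * (ρ u * a t)) := hint3.const_mul 2
    rw [hsplit, integral_sub hadd h2h, integral_add hint1 hint2,
      integral_const_mul, hat, ← hIeven]
    ring
  -- pointwise bound away from {-1, 1}
  have hbd : ∀ u : ℝ, u ≠ -1 → u ≠ 1 →
      ‖ρ u * (a (t + ε * u) + a (t - ε * u) - 2 * a t)‖ ≤ ρ u * (2 * K * ε * L) := by
    intro u hu1 hu2
    rcases eq_or_ne (ρ u) 0 with h0 | h0
    · simp [h0]
    · have husupp : u ∈ Set.Icc (-1 : ℝ) 1 := hρ_supp h0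
      have habs : |u| < 1 := by
        rw [abs_lt]
        exact ⟨lt_of_le_of_ne husupp.1 (Ne.symm hu1), lt_of_le_of_ne husupp.2 hu2⟩
      rcases eq_or_ne u 0 with rfl | hu0
      · have : a (t + ε * 0) + a (t - ε * 0) - 2 * a t = 0 := by
          simp; ring
        rw [this, mul_zero, norm_zero]
        have : (0:ℝ) ≤ 2 * K * ε * L := by positivity
        exact mul_nonneg (hρ_nonneg 0) this
      · have huabs : (0 : ℝ) < |u| := abs_pos.mpr hu0
        set τ := ε * |u| with hτdef
        have hτ0 : 0 < τ := mul_pos hε huabs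
        have hτle : τ ≤ |u| := by
          calc τ = ε * |u| := rfl
            _ ≤ 1 * |u| := mul_le_mul_of_nonneg_right hε1 (abs_nonneg u)
            _ = |u| := one_mul _
        have hτ1 : τ < 1 := lt_of_le_of_lt hτle habs
        have hz := hzyg t τ hτ0 hτ1
        have key : |a (t + ε * u) + a (t - ε * u) - 2 * a t|
            ≤ K * (τ * Real.log (1 + 1 / τ)) := by
          rcases lt_or_gt_of_ne hu0 with h | h
          · have hau : |u| = -u := abs_of_neg h
            have e1 : t + ε * u = t - τ := by rw [hτdef, hau]; ring
            have e2 : t - ε * u = t + τ := by rw [hτdef, hau]; ring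
            rw [e1, e2, show a (t - τ) + a (t + τ) - 2 * a t
              = a (t + τ) + a (t - τ) - 2 * a t from by ring]
            exact hz
          · have hau : |u| = u := abs_of_pos h
            have e1 : t + ε * u = t + τ := by rw [hτdef, hau]
            have e2 : t - ε * u = t - τ := by rw [hτdef, hau]
            rw [e1, e2]; exact hz
        -- bound τ log(1 + 1/τ) ≤ 2 ε L
        have hlogτ : Real.log (1 + 1 / τ) ≤ Real.log (1 + 1 / ε) + Real.log (1 + 1 / |u|) := by
          have h1 : (0 : ℝ) < 1 + 1 / ε := by positivity
          have h2 : (0 : ℝ) < 1 + 1 / |u| := by positivity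
          have hineq : 1 + 1 / τ ≤ (1 + 1 / ε) * (1 + 1 / |u|) := by
            have : 1 / τ = (1 / ε) * (1 / |u|) := by
              rw [hτdef]; field_simp
            rw [this]
            have hε' : (0 : ℝ) ≤ 1 / ε := by positivity
            have hu' : (0 : ℝ) ≤ 1 / |u| := by positivity
            nlinarith
          calc Real.log (1 + 1 / τ) ≤ Real.log ((1 + 1 / ε) * (1 + 1 / |u|)) :=
                Real.log_le_log (by positivity) hineq
            _ = Real.log (1 + 1 / ε) + Real.log (1 + 1 / |u|) :=
                Real.log_mul (ne_of_gt h1) (ne_of_gt h2)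
        have hlogε : Real.log (1 + 1 / ε) ≤ L := by
          rw [hLdef]
          exact Real.log_le_log (by positivity) (by linarith)
        have hulog : |u| * Real.log (1 + 1 / |u|) ≤ 1 := by
          have := Real.log_le_sub_one_of_pos (show (0:ℝ) < 1 + 1 / |u| by positivity)
          have h2 : Real.log (1 + 1 / |u|) ≤ 1 / |u| := by linarith
          calc |u| * Real.log (1 + 1 / |u|) ≤ |u| * (1 / |u|) :=
                mul_le_mul_of_nonneg_left h2 (abs_nonneg u)
            _ = 1 := by field_simp
        have hlog_nonneg : (0:ℝ) ≤ Real.log (1 + 1 / τ) := by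
          apply Real.log_nonneg; have : (0:ℝ) ≤ 1 / τ := by positivity
          linarith
        have hτ2εL : τ * Real.log (1 + 1 / τ) ≤ 2 * ε * L := by
          have hb1 : τ * Real.log (1 + 1 / τ)
              ≤ τ * (Real.log (1 + 1 / ε) + Real.log (1 + 1 / |u|)) :=
            mul_le_mul_of_nonneg_left hlogτ (le_of_lt hτ0)
          have hb2 : τ * Real.log (1 + 1 / ε) ≤ ε * L := by
            have hlogε0 : (0:ℝ) ≤ Real.log (1 + 1 / ε) := by
              apply Real.log_nonneg; linarith
            calc τ * Real.log (1 + 1 / ε) ≤ ε * Real.log (1 + 1 / ε) := by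
                  apply mul_le_mul_of_nonneg_right _ hlogε0
                  calc τ = ε * |u| := rfl
                    _ ≤ ε * 1 := mul_le_mul_of_nonneg_left habs.le hε.le
                    _ = ε := mul_one _
              _ ≤ ε * L := mul_le_mul_of_nonneg_left hlogε hε.le
          have hb3 : τ * Real.log (1 + 1 / |u|) ≤ ε * L := by
            have : τ * Real.log (1 + 1 / |u|) = ε * (|u| * Real.log (1 + 1 / |u|)) := by
              rw [hτdef]; ring
            rw [this]
            calc ε * (|u| * Real.log (1 + 1 / |u|)) ≤ ε * 1 :=
                  mul_le_mul_of_nonneg_left hulog hε.le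
              _ = ε := mul_one _
              _ ≤ ε * L := by nlinarith
          nlinarith
        rw [Real.norm_eq_abs, abs_mul, abs_of_nonneg (hρ_nonneg u)]
        have : |a (t + ε * u) + a (t - ε * u) - 2 * a t| ≤ 2 * K * ε * L := by
          calc |a (t + ε * u) + a (t - ε * u) - 2 * a t|
              ≤ K * (τ * Real.log (1 + 1 / τ)) := key
            _ ≤ K * (2 * ε * L) := mul_le_mul_of_nonneg_left hτ2εL hK
            _ = 2 * K * ε * L := by ring
        exact mul_le_mul_of_nonneg_left this (hρ_nonneg u)
  -- a.e. bound
  have hae : ∀ᵐ u : ℝ, ‖ρ u * (a (t + ε * u) + a (t - ε * u) - 2 * a t)‖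
      ≤ ρ u * (2 * K * ε * L) := by
    have hmz : volume ({-1, 1} : Set ℝ) = 0 :=
      Set.Finite.measure_zero (Set.toFinite _) volume
    have hmem : ∀ᵐ u : ℝ, u ∉ ({-1, 1} : Set ℝ) := measure_eq_zero_iff_ae_notMem.mp hmz
    filter_upwards [hmem] with u hu
    exact hbd u (fun h => hu (by simp [h])) (fun h => hu (by simp [h]))
  -- integrate the bound
  have hg_int : Integrable (fun u => ρ u * (a (t + ε * u) + a (t - ε * u) - 2 * a t)) := by
    have hsplit : (fun u => ρ u * (a (t + ε * u) + a (t - ε * u) - 2 * a t))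
        = fun u => (ρ u * a (t + ε * u) + ρ u * a (t - ε * u)) - (2 : ℝ) * (ρ u * a t) := by
      funext u; ring
    rw [hsplit]
    exact (hint1.add hint2).sub (hint3.const_mul 2)
  have hh_int : Integrable (fun u => ρ u * (2 * K * ε * L)) := hρint.mul_const _
  have hJbound : |∫ u, ρ u * (a (t + ε * u) + a (t - ε * u) - 2 * a t)| ≤ 2 * K * ε * L := by
    calc |∫ u, ρ u * (a (t + ε * u) + a (t - ε * u) - 2 * a t)|
        ≤ ∫ u, ‖ρ u * (a (t + ε * u) + a (t - ε * u) - 2 * a t)‖ :=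
          (Real.norm_eq_abs _) ▸ norm_integral_le_integral_norm _
      _ ≤ ∫ u, ρ u * (2 * K * ε * L) := integral_mono_ae hg_int.norm hh_int hae
      _ = 2 * K * ε * L := by rw [integral_mul_const, hρ_int, one_mul]
  -- conclude
  rw [hI]
  have h2 : (∫ u, ρ u * a (t - ε * u)) - a t
      = (∫ u, ρ u * (a (t + ε * u) + a (t - ε * u) - 2 * a t)) / 2 := by
    rw [hJ]; ring
  rw [h2, abs_div, abs_two]
  rw [div_le_iff₀ (by norm_num : (0:ℝ) < 2)]
  calc |∫ u, ρ u * (a (t + ε * u) + a (t - ε * u) - 2 * a t)| ≤ 2 * K * ε * L := hJbound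
    _ ≤ (K + 1) * ε * L * 2 := by nlinarith
end

section
/- With the notation and hypotheses of the previous mollification setup (a bounded log-Zygmund, a_ε = ρ_ε * a), there exists C depending only on ‖a‖_{LZ} such that for all γ ≥ 1, ε ∈ (0,1], t ∈ ℝ: |∂_t a_ε(t)| ≤ C log²(1+γ+1/ε). -/
open MeasureTheory Real

private lemma zyg_step (M K : ℝ) (hM : 0 ≤ M) (hK : 0 ≤ K) (a : ℝ → ℝ)
    (hb : ∀ t, |a t| ≤ M)
    (hz : ∀ t τ : ℝ, 0 < τ → τ < 1 →
      |a (t + τ) + a (t - τ) - 2 * a t| ≤ K * (τ * Real.log (1 + 1 / τ))) :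
    ∀ n : ℕ, ∀ t τ : ℝ, 0 < τ → τ < 1 → 1 ≤ 2 ^ n * τ →
      |a (t + τ) - a t| ≤ 4 * M * τ + K * n * (τ * Real.log (1 + 1 / τ)) := by
  intro n
  induction n with
  | zero => intro t τ h0 h1 h2; norm_num at h2; linarith
  | succ n ih =>
    intro t τ h0 h1 h2
    have hn0 : (0:ℝ) ≤ (n:ℝ) := Nat.cast_nonneg n
    have hτinv : (1:ℝ) ≤ 1 + 1/τ := by
      have : 0 < 1/τ := by positivity
      linarith
    have hL0 : 0 ≤ Real.log (1 + 1/τ) := Real.log_nonneg hτinv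
    set L : ℝ := Real.log (1 + 1/τ) with hLdef
    have hτL : 0 ≤ τ * L := mul_nonneg h0.le hL0
    have hKτL : 0 ≤ K * (τ * L) := mul_nonneg hK hτL
    have hKnτL : 0 ≤ K * (n:ℝ) * (τ * L) := mul_nonneg (mul_nonneg hK hn0) hτL
    have hz' := hz (t + τ) τ h0 h1
    have key : |a (t + τ) - a t| ≤
        (|a (t + τ + τ) - a t| + |a (t + τ + τ) + a (t + τ - τ) - 2 * a (t + τ)|) / 2 := by
      have h3 : a (t + τ) - a t =
          ((a (t + τ + τ) - a t) - (a (t + τ + τ) + a (t + τ - τ) - 2 * a (t + τ))) / 2 := by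
        have h4 : t + τ - τ = t := by ring
        rw [h4]; ring
      rw [h3, abs_div, abs_two]
      have := abs_sub (a (t + τ + τ) - a t) (a (t + τ + τ) + a (t + τ - τ) - 2 * a (t + τ))
      linarith
    rcases le_or_gt 1 (2 * τ) with hc | hc
    · have h2tau : |a (t + τ + τ) - a t| ≤ 2 * M := by
        have := abs_sub (a (t + τ + τ)) (a t)
        have h5 := hb (t + τ + τ); have h6 := hb t; linarith
      have hMτ : M * 1 ≤ M * (2 * τ) := mul_le_mul_of_nonneg_left hc hM
      push_cast
      nlinarith [key, hz', h2tau]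
    · have ih' := ih t (2 * τ) (by linarith) hc (by
        rw [pow_succ] at h2; nlinarith)
      have hL2 : Real.log (1 + 1/(2*τ)) ≤ L := by
        apply Real.log_le_log (by positivity)
        have : 1/(2*τ) ≤ 1/τ := by
          apply div_le_div_of_nonneg_left one_pos.le h0; linarith
        linarith
      have h2τ : t + 2 * τ = t + τ + τ := by ring
      rw [h2τ] at ih'
      have hKn0 : 0 ≤ K * (n:ℝ) := mul_nonneg hK hn0
      have hmono : K * (n:ℝ) * (2 * τ * Real.log (1 + 1/(2*τ))) ≤ K * (n:ℝ) * (2 * (τ * L)) := by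
        apply mul_le_mul_of_nonneg_left _ hKn0
        have := mul_le_mul_of_nonneg_left hL2 (show (0:ℝ) ≤ 2 * τ by linarith)
        linarith
      have ih'' : |a (t + τ + τ) - a t| ≤ 8 * M * τ + 2 * (K * (n:ℝ) * (τ * L)) := by
        nlinarith [ih', hmono]
      push_cast
      nlinarith [key, hz', ih'']

private lemma zyg_modulus (M K : ℝ) (hM : 0 ≤ M) (hK : 0 ≤ K) (a : ℝ → ℝ)
    (hb : ∀ t, |a t| ≤ M)
    (hz : ∀ t τ : ℝ, 0 < τ → τ < 1 →
      |a (t + τ) + a (t - τ) - 2 * a t| ≤ K * (τ * Real.log (1 + 1 / τ))) :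
    ∀ t τ : ℝ, 0 < τ → τ < 1 →
      |a (t + τ) - a t| ≤ 4 * M * τ + 4 * K * (τ * (Real.log (1 + 1 / τ)) ^ 2) := by
  intro t τ h0 h1
  have hτ1 : (1:ℝ) < 1/τ := by rw [lt_div_iff₀ h0]; linarith
  have hL2 : Real.log 2 ≤ Real.log (1 + 1/τ) := Real.log_le_log two_pos (by linarith)
  have hL0 : 0 ≤ Real.log (1 + 1/τ) := le_trans (Real.log_nonneg one_le_two) hL2
  set L : ℝ := Real.log (1 + 1/τ) with hLdef
  set x : ℝ := Real.logb 2 (1/τ) with hxdef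
  have hx0 : 0 ≤ x := Real.logb_nonneg one_lt_two hτ1.le
  set n : ℕ := ⌈x⌉₊ with hndef
  have hlog2 : (0.6931471803:ℝ) < Real.log 2 := Real.log_two_gt_d9
  -- 1 ≤ 2^n * τ
  have h2n : 1 ≤ 2 ^ n * τ := by
    have h1' : (1:ℝ)/τ = (2:ℝ) ^ x := (Real.rpow_logb two_pos (by norm_num) (by positivity)).symm
    have h2' : (2:ℝ) ^ x ≤ (2:ℝ) ^ (n:ℝ) :=
      Real.rpow_le_rpow_of_exponent_le one_le_two (Nat.le_ceil x)
    have h3' : (2:ℝ) ^ (n:ℝ) = (2:ℝ) ^ n := by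
      rw [Real.rpow_natCast]
    have : (1:ℝ)/τ ≤ 2 ^ n := by rw [h1']; rw [← h3']; exact h2'
    rw [div_le_iff₀ h0] at this
    linarith [this]
  -- n ≤ 4 L
  have hn4 : (n:ℝ) ≤ 4 * L := by
    have hceil : (n:ℝ) < x + 1 := Nat.ceil_lt_add_one hx0
    have hxlog : x * Real.log 2 ≤ L := by
      rw [hxdef, Real.logb, div_mul_cancel₀]
      · exact Real.log_le_log (by positivity) (by linarith)
      · linarith
    nlinarith
  have := zyg_step M K hM hK a hb hz n t τ h0 h1 h2n
  have hτL : 0 ≤ τ * L := mul_nonneg h0.le hL0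
  nlinarith [this, mul_le_mul_of_nonneg_right hn4 hτL, mul_nonneg hK hτL]

-- θ L(θ)² ≤ 9 on (0,1]
private lemma small_bound : ∀ θ : ℝ, 0 < θ → θ ≤ 1 → θ * (Real.log (1 + 1/θ)) ^ 2 ≤ 9 := by
  intro θ h0 h1
  set σ : ℝ := Real.sqrt θ with hσdef
  have hσ0 : 0 < σ := Real.sqrt_pos.mpr h0
  have hσ1 : σ ≤ 1 := by
    rw [hσdef, show (1:ℝ) = Real.sqrt 1 from Real.sqrt_one.symm]
    exact Real.sqrt_le_sqrt h1
  have hσsq : σ ^ 2 = θ := Real.sq_sqrt h0.le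
  have hlogσ0 : 0 ≤ Real.log (1/σ) := Real.log_nonneg (by rw [le_div_iff₀ hσ0]; linarith)
  have hσlog : σ * Real.log (1/σ) ≤ 1 := by
    have := Real.log_le_sub_one_of_pos (show (0:ℝ) < 1/σ by positivity)
    have h2 : σ * Real.log (1/σ) ≤ σ * (1/σ - 1) := by nlinarith
    have h3 : σ * (1/σ - 1) = 1 - σ := by field_simp
    nlinarith
  have hlogθ : Real.log (1/θ) = 2 * Real.log (1/σ) := by
    have : (1:ℝ)/θ = (1/σ)^2 := by rw [← hσsq]; field_simp
    rw [this, Real.log_pow]; push_cast; ring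
  have hθlog2 : θ * (Real.log (1/θ))^2 ≤ 4 := by
    rw [hlogθ, ← hσsq]
    have h4 : (σ * Real.log (1/σ))^2 ≤ 1 := by
      nlinarith [mul_nonneg hσ0.le hlogσ0]
    nlinarith
  have hLb : Real.log (1 + 1/θ) ≤ Real.log 2 + Real.log (1/θ) := by
    have h7 : (1:ℝ) ≤ 1/θ := by rw [le_div_iff₀ h0]; linarith
    have h5 : 1 + 1/θ ≤ 2 * (1/θ) := by linarith
    calc Real.log (1 + 1/θ) ≤ Real.log (2 * (1/θ)) := Real.log_le_log (by positivity) h5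
      _ = Real.log 2 + Real.log (1/θ) := Real.log_mul two_ne_zero (by positivity)
  have hL0 : 0 ≤ Real.log (1 + 1/θ) := Real.log_nonneg (by linarith [one_div_pos.mpr h0])
  have hlog2' : Real.log 2 < 0.6931471808 := Real.log_two_lt_d9
  have hlog2'' : 0 < Real.log 2 := by linarith [Real.log_two_gt_d9]
  have hlogθ0 : 0 ≤ Real.log (1/θ) := by rw [hlogθ]; linarith
  have hsq : (Real.log (1 + 1/θ))^2 ≤ 2 * (Real.log 2)^2 + 2 * (Real.log (1/θ))^2 := by
    nlinarith [sq_nonneg (Real.log 2 - Real.log (1/θ))]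
  nlinarith [mul_le_mul_of_nonneg_left hsq h0.le, sq_nonneg (Real.log (1/θ))]

-- scaling: u L(u)² ≤ 40 ε L(ε)² for 0 < u ≤ ε ≤ 1
private lemma scaling_bound (u ε : ℝ) (hu : 0 < u) (huε : u ≤ ε) (hε1 : ε ≤ 1) :
    u * (Real.log (1 + 1/u)) ^ 2 ≤ 40 * (ε * (Real.log (1 + 1/ε)) ^ 2) := by
  have hε0 : 0 < ε := lt_of_lt_of_le hu huε
  set θ : ℝ := u / ε with hθdef
  have hθ0 : 0 < θ := by positivity
  have hθ1 : θ ≤ 1 := (div_le_one hε0).mpr huε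
  have huθ : u = ε * θ := by rw [hθdef, mul_div_cancel₀ _ hε0.ne']
  have hLu : Real.log (1 + 1/u) ≤ Real.log (1 + 1/ε) + Real.log (1 + 1/θ) := by
    have h5 : 1 + 1/u ≤ (1 + 1/ε) * (1 + 1/θ) := by
      have : (1 + 1/ε) * (1 + 1/θ) = 1 + 1/θ + 1/ε + (1/ε) * (1/θ) := by ring
      rw [this]
      have h6 : (1:ℝ)/u = (1/ε) * (1/θ) := by rw [huθ]; field_simp
      rw [h6]
      have : 0 < 1/θ := by positivity
      have : 0 < 1/ε := by positivity
      linarith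
    calc Real.log (1 + 1/u) ≤ Real.log ((1 + 1/ε) * (1 + 1/θ)) :=
          Real.log_le_log (by positivity) h5
      _ = Real.log (1 + 1/ε) + Real.log (1 + 1/θ) := by
          rw [Real.log_mul (by positivity) (by positivity)]
  have hLε0 : 0 ≤ Real.log (1 + 1/ε) := Real.log_nonneg (by linarith [one_div_pos.mpr hε0])
  have hLθ0 : 0 ≤ Real.log (1 + 1/θ) := Real.log_nonneg (by linarith [one_div_pos.mpr hθ0])
  have hLu0 : 0 ≤ Real.log (1 + 1/u) := Real.log_nonneg (by linarith [one_div_pos.mpr hu])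
  have hsmall := small_bound θ hθ0 hθ1
  -- L(ε) ≥ log 2
  have hεlog : Real.log 2 ≤ Real.log (1 + 1/ε) := by
    apply Real.log_le_log two_pos
    have : (1:ℝ) ≤ 1/ε := by rw [le_div_iff₀ hε0]; linarith
    linarith
  have hlog2 : (0.6931471803:ℝ) < Real.log 2 := Real.log_two_gt_d9
  have hsq : (Real.log (1 + 1/u))^2 ≤
      2 * (Real.log (1 + 1/ε))^2 + 2 * (Real.log (1 + 1/θ))^2 := by
    nlinarith [sq_nonneg (Real.log (1 + 1/ε) - Real.log (1 + 1/θ))]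
  -- u L(u)² = ε θ L(u)² ≤ 2εθ L(ε)² + 2ε (θL(θ)²) ≤ 2ε L(ε)² + 18 ε
  have step1 : u * (Real.log (1 + 1/u))^2 ≤
      2 * (ε * θ) * (Real.log (1 + 1/ε))^2 + 2 * ε * (θ * (Real.log (1 + 1/θ))^2) := by
    calc u * (Real.log (1 + 1/u))^2
        ≤ u * (2 * (Real.log (1 + 1/ε))^2 + 2 * (Real.log (1 + 1/θ))^2) :=
          mul_le_mul_of_nonneg_left hsq hu.le
      _ = 2 * (ε * θ) * (Real.log (1 + 1/ε))^2 + 2 * ε * (θ * (Real.log (1 + 1/θ))^2) := by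
          rw [huθ]; ring
  have step2 : 2 * (ε * θ) * (Real.log (1 + 1/ε))^2 ≤ 2 * ε * (Real.log (1 + 1/ε))^2 := by
    nlinarith [mul_nonneg (mul_nonneg hε0.le (sub_nonneg.mpr hθ1)) (sq_nonneg (Real.log (1 + 1/ε)))]
  have step3 : 2 * ε * (θ * (Real.log (1 + 1/θ))^2) ≤ 18 * ε := by
    nlinarith [mul_le_mul_of_nonneg_left hsmall hε0.le]
  have hlog2pos : (0:ℝ) < Real.log 2 := by linarith
  have step4 : 18 * ε ≤ 38 * (ε * (Real.log (1 + 1/ε))^2) := by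
    nlinarith [mul_le_mul_of_nonneg_left (mul_le_mul hεlog hεlog hlog2pos.le hLε0) hε0.le,
      sq_nonneg (Real.log 2 - 0.6931471803), mul_pos hε0 hlog2pos, hε0.le]
  linarith


set_option maxHeartbeats 1000000 in
open scoped Convolution in
/-- for a bounded log-Zygmund function `a` and the mollification
`a_ε = ρ_ε * a`, one has `|∂_t a_ε(t)| ≤ C log²(1+γ+1/ε)` for all `γ ≥ 1`,
`ε ∈ (0,1]`, with `C` depending only on the log-Zygmund norm of `a`. -/
theorem mollified_logZygmund_deriv (ρ : ℝ → ℝ)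
    (hρ_smooth : ContDiff ℝ (⊤ : ℕ∞) ρ) (hρ_even : ∀ s, ρ (-s) = ρ s)
    (hρ_nonneg : ∀ s, 0 ≤ ρ s) (hρ_le_one : ∀ s, ρ s ≤ 1)
    (hρ_supp : Function.support ρ ⊆ Set.Icc (-1 : ℝ) 1)
    (hρ_int : ∫ s, ρ s = 1)
    (M K : ℝ) (hM : 0 ≤ M) (hK : 0 ≤ K) :
    ∃ C > 0, ∀ a : ℝ → ℝ, Measurable a →
      (∀ t, |a t| ≤ M) →
      (∀ t τ : ℝ, 0 < τ → τ < 1 →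
        |a (t + τ) + a (t - τ) - 2 * a t| ≤ K * (τ * Real.log (1 + 1 / τ))) →
      ∀ γ : ℝ, 1 ≤ γ → ∀ ε : ℝ, 0 < ε → ε ≤ 1 → ∀ t : ℝ,
        |deriv (fun t' => ∫ s, ε⁻¹ * ρ ((t' - s) / ε) * a s) t|
          ≤ C * (Real.log (1 + γ + 1 / ε)) ^ 2 := by
  have hρ_cont : Continuous ρ := hρ_smooth.continuous
  have hρ_cs : HasCompactSupport ρ :=
    HasCompactSupport.intro isCompact_Icc (fun x hx => by
      by_contra h; exact hx (hρ_supp (Function.mem_support.mpr h)))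
  have hD_cont : Continuous (deriv ρ) := hρ_smooth.continuous_deriv (by simp)
  have hD_cs : HasCompactSupport (deriv ρ) := hρ_cs.deriv
  obtain ⟨R, hR⟩ := hD_cs.exists_bound_of_continuous hD_cont
  have hR0 : 0 ≤ R := le_trans (norm_nonneg _) (hR 0)
  have hρ1 : ρ 1 = 0 := by
    have h1 : Filter.Tendsto ρ (nhdsWithin (1:ℝ) (Set.Ioi 1)) (nhds (ρ 1)) :=
      (hρ_cont.continuousAt).continuousWithinAt.tendsto
    have h2 : Filter.Tendsto ρ (nhdsWithin (1:ℝ) (Set.Ioi 1)) (nhds 0) := by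
      apply Filter.Tendsto.congr' _ tendsto_const_nhds
      filter_upwards [self_mem_nhdsWithin] with x hx
      have hx1 : (1:ℝ) < x := hx
      have : x ∉ Set.Icc (-1:ℝ) 1 := by
        simp only [Set.mem_Icc, not_and_or]; right; linarith
      exact (Function.notMem_support.mp fun hs => this (hρ_supp hs)).symm
    exact tendsto_nhds_unique h1 h2
  have hρneg1 : ρ (-1) = 0 := (hρ_even 1).trans hρ1
  have hDsupp : Function.support (deriv ρ) ⊆ Set.Icc (-1:ℝ) 1 :=
    support_deriv_subset.trans (closure_minimal hρ_supp isClosed_Icc)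
  have hDint0 : ∫ s, deriv ρ s = 0 := by
    have h1 : ∫ s, deriv ρ s = ∫ s in Set.Icc (-1:ℝ) 1, deriv ρ s :=
      (setIntegral_eq_integral_of_forall_compl_eq_zero (fun x hx =>
        Function.notMem_support.mp (fun hs => hx (hDsupp hs)))).symm
    rw [h1, MeasureTheory.integral_Icc_eq_integral_Ioc,
      ← intervalIntegral.integral_of_le (by norm_num : (-1:ℝ) ≤ 1)]
    rw [intervalIntegral.integral_deriv_eq_sub
      (fun x _ => (hρ_smooth.differentiable (by simp)) x)
      ((hD_cont.intervalIntegrable _ _))]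
    rw [hρ1, hρneg1]; ring
  refine ⟨32*M*R + 320*K*R + 1, by positivity, ?_⟩
  intro a ha_meas ha_bdd ha_zyg γ hγ ε hε0 hε1 t
  have hmod := zyg_modulus M K hM hK a ha_bdd ha_zyg
  set g : ℝ → ℝ := fun u => ε⁻¹ * ρ (u / ε) with hgdef
  have hg_cd : ContDiff ℝ 1 g :=
    contDiff_const.mul ((hρ_smooth.of_le (by simp)).comp (contDiff_id.div_const ε))
  have hg_cs : HasCompactSupport g := by
    apply HasCompactSupport.intro (isCompact_Icc (a := -ε) (b := ε))
    intro x hx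
    have hz : ρ (x/ε) = 0 := by
      apply Function.notMem_support.mp
      intro hs
      have hmem := hρ_supp hs
      simp only [Set.mem_Icc] at hmem
      obtain ⟨hl, hr⟩ := hmem
      rw [le_div_iff₀ hε0] at hl
      rw [div_le_iff₀ hε0] at hr
      exact hx ⟨by linarith, by linarith⟩
    simp only [hgdef, hz, mul_zero]
  have ha_loc : LocallyIntegrable a volume :=
    (memLp_top_of_bound ha_meas.aestronglyMeasurable M
      (Filter.Eventually.of_forall fun x => by
        rw [Real.norm_eq_abs]; exact ha_bdd x)).locallyIntegrable le_top
  have hconv_eq : (fun t' => ∫ s, ε⁻¹ * ρ ((t' - s) / ε) * a s)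
      = (a ⋆[ContinuousLinearMap.mul ℝ ℝ, volume] g) := by
    funext t'
    rw [convolution_def]
    congr 1; funext s
    simp only [ContinuousLinearMap.mul_apply', hgdef]
    ring
  have hDer : HasDerivAt (fun t' => ∫ s, ε⁻¹ * ρ ((t' - s) / ε) * a s)
      ((a ⋆[ContinuousLinearMap.mul ℝ ℝ, volume] (deriv g)) t) t := by
    rw [hconv_eq]
    exact hg_cs.hasDerivAt_convolution_right _ ha_loc hg_cd t
  rw [hDer.deriv]
  set h : ℝ → ℝ := fun u => ε⁻¹ * (deriv ρ (u/ε) * ε⁻¹) with hhdef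
  have hg' : deriv g = h := by
    funext u
    have h2 : HasDerivAt ρ (deriv ρ (u/ε)) (u/ε) :=
      ((hρ_smooth.differentiable (by simp)) (u/ε)).hasDerivAt
    have h3 : HasDerivAt (fun u : ℝ => u/ε) ε⁻¹ u := by
      simpa [one_div] using (hasDerivAt_id u).div_const ε
    have h1 : HasDerivAt (fun u : ℝ => ρ (u/ε)) (deriv ρ (u/ε) * ε⁻¹) u := by
      exact HasDerivAt.comp u h2 h3
    exact (h1.const_mul ε⁻¹).deriv
  rw [hg']
  have hval : (a ⋆[ContinuousLinearMap.mul ℝ ℝ, volume] h) t = ∫ s, a s * h (t - s) := by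
    rw [convolution_def]; simp only [ContinuousLinearMap.mul_apply']
  have hh_cont : Continuous h :=
    continuous_const.mul ((hD_cont.comp (continuous_id.div_const ε)).mul continuous_const)
  have hh_supp : ∀ u, u ∉ Set.Icc (-ε) ε → h u = 0 := by
    intro u hu
    have hz : deriv ρ (u/ε) = 0 := by
      apply Function.notMem_support.mp
      intro hs
      have hmem := hDsupp hs
      simp only [Set.mem_Icc] at hmem
      obtain ⟨hl, hr⟩ := hmem
      rw [le_div_iff₀ hε0] at hl
      rw [div_le_iff₀ hε0] at hr
      exact hu ⟨by linarith, by linarith⟩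
    simp only [hhdef, hz, zero_mul, mul_zero]
  have hh_cs : HasCompactSupport h := HasCompactSupport.intro isCompact_Icc hh_supp
  have hh_int : Integrable h := hh_cont.integrable_of_hasCompactSupport hh_cs
  have hh_int' : Integrable (fun s => h (t - s)) := by
    apply Continuous.integrable_of_hasCompactSupport
      (hh_cont.comp (continuous_const.sub continuous_id))
    apply HasCompactSupport.intro (isCompact_Icc (a := t - ε) (b := t + ε))
    intro s hs
    apply hh_supp
    intro hmem
    simp only [Set.mem_Icc, id_eq, Pi.sub_apply] at hmem
    exact hs ⟨by linarith [hmem.2], by linarith [hmem.1]⟩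
  have hint1 : Integrable (fun s => a s * h (t - s)) :=
    hh_int'.bdd_mul ha_meas.aestronglyMeasurable
      (Filter.Eventually.of_forall fun x => by rw [Real.norm_eq_abs]; exact ha_bdd x)
  have hint3 : Integrable (fun s => a t * h (t - s)) := hh_int'.const_mul _
  have hint2 : Integrable (fun s => (a s - a t) * h (t - s)) := by
    have heq : (fun s => (a s - a t) * h (t - s))
        = fun s => a s * h (t - s) - a t * h (t - s) := by funext s; ring
    rw [heq]; exact hint1.sub hint3
  have hzero : ∫ s, h (t - s) = 0 := by
    have e1 : ∫ s, h (t - s) = ∫ s, h s := by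
      calc ∫ s, h (t - s) = ∫ s, (fun x => h (t + x)) (-s) := by
            simp only [sub_eq_add_neg]
        _ = ∫ s, h (t + s) := integral_neg_eq_self (fun x => h (t + x)) volume
        _ = ∫ s, h s := integral_add_left_eq_self (fun x => h x) t
    rw [e1]
    have e2 : ∫ s, h s = (ε⁻¹ * ε⁻¹) * ∫ s, deriv ρ (s/ε) := by
      rw [← integral_const_mul]
      congr 1; funext s; simp only [hhdef]; ring
    rw [e2, Measure.integral_comp_div (fun x => deriv ρ x) ε, hDint0]
    simp
  have hsplit : ∫ s, a s * h (t - s) = ∫ s, (a s - a t) * h (t - s) := by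
    have e3 : (fun s => a s * h (t - s))
        = fun s => (a s - a t) * h (t - s) + a t * h (t - s) := by funext s; ring
    rw [e3, integral_add hint2 hint3, integral_const_mul, hzero, mul_zero, add_zero]
  rw [hval, hsplit]
  -- the quantitative bound
  have hεinv1 : (1:ℝ) ≤ 1/ε := by rw [le_div_iff₀ hε0]; linarith
  have hLε0 : 0 ≤ Real.log (1 + 1/ε) := Real.log_nonneg (by linarith)
  set Lε : ℝ := Real.log (1 + 1/ε) with hLεdef
  clear_value Lε
  set W : ℝ := 4*M*ε + 4*K*(40*(ε*Lε^2)) with hWdef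
  clear_value W
  have hW0 : 0 ≤ W := by rw [hWdef]; positivity
  set B : ℝ := W * (ε⁻¹ * (R * ε⁻¹)) with hBdef
  clear_value B
  have hB0 : 0 ≤ B := by rw [hBdef]; exact mul_nonneg hW0 (by positivity)
  have habs : ∀ s : ℝ, s ∈ Set.Icc (t-ε) (t+ε) → s ≠ t - ε → s ≠ t + ε →
      |a s - a t| ≤ W := by
    intro s hmem hne1 hne2
    simp only [Set.mem_Icc] at hmem
    rcases lt_trichotomy s t with hlt | heq | hgt
    · set τ : ℝ := t - s with hτdef
      clear_value τ
      have hτ0 : 0 < τ := by simp only [hτdef]; linarith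
      have hτε : τ < ε := by
        simp only [hτdef]
        rcases lt_or_eq_of_le hmem.1 with hh | hh
        · linarith
        · exact absurd hh.symm hne1
      have hτ1 : τ < 1 := lt_of_lt_of_le hτε hε1
      have hm := hmod s τ hτ0 hτ1
      have hst : s + τ = t := by simp only [hτdef]; ring
      rw [hst] at hm
      have hsc := scaling_bound τ ε hτ0 hτε.le hε1
      have h4 : 4*K*(τ * (Real.log (1 + 1/τ))^2) ≤ 4*K*(40*(ε*Lε^2)) := by
        rw [hLεdef]
        have := mul_le_mul_of_nonneg_left hsc (by linarith : (0:ℝ) ≤ 4*K)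
        linarith
      rw [abs_sub_comm]
      have h5 : 4*M*τ ≤ 4*M*ε := by nlinarith
      refine le_trans hm ?_
      rw [hWdef]
      linarith only [h4, h5]
    · rw [heq]; simp [hW0]
    · set τ : ℝ := s - t with hτdef
      clear_value τ
      have hτ0 : 0 < τ := by simp only [hτdef]; linarith
      have hτε : τ < ε := by
        simp only [hτdef]
        rcases lt_or_eq_of_le hmem.2 with hh | hh
        · linarith
        · exact absurd hh hne2
      have hτ1 : τ < 1 := lt_of_lt_of_le hτε hε1
      have hm := hmod t τ hτ0 hτ1
      have hst : t + τ = s := by simp only [hτdef]; ring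
      rw [hst] at hm
      have hsc := scaling_bound τ ε hτ0 hτε.le hε1
      have h4 : 4*K*(τ * (Real.log (1 + 1/τ))^2) ≤ 4*K*(40*(ε*Lε^2)) := by
        rw [hLεdef]
        have := mul_le_mul_of_nonneg_left hsc (by linarith : (0:ℝ) ≤ 4*K)
        linarith
      have h5 : 4*M*τ ≤ 4*M*ε := by nlinarith
      refine le_trans hm ?_
      rw [hWdef]
      linarith only [h4, h5]
  have hhb : ∀ u : ℝ, |h u| ≤ ε⁻¹ * (R * ε⁻¹) := by
    intro u
    simp only [hhdef]
    rw [abs_mul, abs_mul]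
    have h6 : |deriv ρ (u/ε)| ≤ R := by rw [← Real.norm_eq_abs]; exact hR _
    have h7 : |ε⁻¹| = ε⁻¹ := abs_of_pos (by positivity)
    rw [h7]
    apply mul_le_mul_of_nonneg_left _ (by positivity : (0:ℝ) ≤ ε⁻¹)
    exact mul_le_mul_of_nonneg_right h6 (by positivity)
  have hG_int : Integrable ((Set.Icc (t-ε) (t+ε)).indicator (fun _ => B)) := by
    rw [integrable_indicator_iff measurableSet_Icc]
    exact integrableOn_const measure_Icc_lt_top.ne
  have hae : ∀ᵐ s : ℝ, ‖(a s - a t) * h (t - s)‖ ≤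
      (Set.Icc (t-ε) (t+ε)).indicator (fun _ => B) s := by
    have hpair : ∀ᵐ s : ℝ, s ∉ ({t - ε, t + ε} : Set ℝ) :=
      measure_eq_zero_iff_ae_notMem.mp
        ((Set.toFinite ({t - ε, t + ε} : Set ℝ)).measure_zero _)
    filter_upwards [hpair] with s hs
    simp only [Set.mem_insert_iff, Set.mem_singleton_iff, not_or] at hs
    by_cases hmem : s ∈ Set.Icc (t-ε) (t+ε)
    · rw [Set.indicator_of_mem hmem, Real.norm_eq_abs, abs_mul]
      calc |a s - a t| * |h (t - s)| ≤ W * (ε⁻¹ * (R * ε⁻¹)) :=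
            mul_le_mul (habs s hmem hs.1 hs.2) (hhb (t - s)) (abs_nonneg _) hW0
        _ = B := hBdef.symm
    · rw [Set.indicator_of_notMem hmem]
      have hz : h (t - s) = 0 := by
        apply hh_supp
        intro hmem2
        simp only [Set.mem_Icc] at hmem2 hmem
        exact hmem ⟨by linarith [hmem2.2], by linarith [hmem2.1]⟩
      rw [hz, mul_zero]; simp
  have hbound : |∫ s, (a s - a t) * h (t - s)| ≤ B * (2*ε) := by
    calc |∫ s, (a s - a t) * h (t - s)| = ‖∫ s, (a s - a t) * h (t - s)‖ :=
          (Real.norm_eq_abs _).symm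
      _ ≤ ∫ s, (Set.Icc (t-ε) (t+ε)).indicator (fun _ => B) s :=
          norm_integral_le_of_norm_le hG_int hae
      _ = (volume (Set.Icc (t-ε) (t+ε))).toReal • B :=
          integral_indicator_const B measurableSet_Icc
      _ = B * (2*ε) := by
          rw [Real.volume_Icc, smul_eq_mul]
          rw [show t + ε - (t - ε) = 2*ε by ring, ENNReal.toReal_ofReal (by linarith)]
          ring
  have hBe : B * (2*ε) = 8*M*R + 320*(K*R*Lε^2) := by
    simp only [hBdef, hWdef]
    field_simp
    ring
  rw [hBe] at hbound
  -- compare logs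
  set L' : ℝ := Real.log (1 + γ + 1/ε) with hL'def
  clear_value L'
  have hεinvpos : (0:ℝ) < 1/ε := by positivity
  have hLL' : Lε ≤ L' := by
    rw [hLεdef, hL'def]
    apply Real.log_le_log (by linarith)
    linarith
  have hεlog2 : Real.log 2 ≤ Lε := by
    rw [hLεdef]
    apply Real.log_le_log two_pos; linarith
  have hlog2 : (0.6931471803:ℝ) < Real.log 2 := Real.log_two_gt_d9
  have hεL' : Real.log 2 ≤ L' := le_trans hεlog2 hLL'
  have hLε0' : 0 ≤ Lε := by linarith
  have hL'2 : Lε^2 ≤ L'^2 := pow_le_pow_left₀ hLε0' hLL' 2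
  have h1L : (1:ℝ) ≤ 4 * L'^2 := by
    nlinarith [hεL', hlog2, sq_nonneg (L' - Real.log 2), sq_nonneg (Real.log 2 - 0.6931471803)]
  calc |∫ s, (a s - a t) * h (t - s)| ≤ 8*M*R + 320*(K*R*Lε^2) := hbound
    _ ≤ (32*M*R + 320*K*R + 1) * L'^2 := by
        nlinarith [mul_le_mul_of_nonneg_left h1L (mul_nonneg hM hR0),
          mul_le_mul_of_nonneg_left hL'2 (mul_nonneg hK hR0), sq_nonneg L']
end

section
/- With the same mollification setup (a bounded log-Zygmund, a_ε = ρ_ε * a), there exists C depending only on ‖a‖_{LZ} such that for all γ ≥ 1, ε ∈ (0,1], t ∈ ℝ: |∂_t² a_ε(t)| ≤ C ε^{-1} log(1+γ+1/ε). -/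
open MeasureTheory

private lemma aux_log_bound (u ε : ℝ) (hu : 0 < u) (hu1 : u < 1) (huε : u ≤ ε)
    (hε1 : ε ≤ 1) :
    u * Real.log (1 + 1 / u) ≤ 4 * (ε * Real.log (1 + 1 / ε)) := by
  have hε : 0 < ε := lt_of_lt_of_le hu huε
  have h1le : (1 : ℝ) ≤ 1 / ε := (le_div_iff₀ hε).mpr (by linarith)
  have hL2 : Real.log 2 ≤ Real.log (1 + 1 / ε) :=
    Real.log_le_log (by norm_num) (by linarith)
  have hlog2 : (0.6931471803 : ℝ) < Real.log 2 := Real.log_two_gt_d9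
  have hLpos : 0 < Real.log (1 + 1 / ε) := lt_of_lt_of_le (by linarith) hL2
  have h1u : (1 : ℝ) ≤ 1 / u := (le_div_iff₀ hu).mpr (by linarith)
  have h1 : Real.log (1 + 1 / u) ≤ Real.log (2 / u) := by
    apply Real.log_le_log (by positivity)
    have : (1 : ℝ) + 1 / u ≤ 1 / u + 1 / u := by linarith
    calc (1 : ℝ) + 1 / u ≤ 1 / u + 1 / u := this
      _ = 2 / u := by ring
  have h2 : Real.log (2 / u) = Real.log 2 + Real.log (ε / u) + Real.log (1 / ε) := by
    rw [Real.log_div (by norm_num) hu.ne', Real.log_div hε.ne' hu.ne', one_div,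
      Real.log_inv]
    ring
  have h3 : Real.log (ε / u) ≤ ε / u :=
    le_trans (Real.log_le_sub_one_of_pos (by positivity)) (by linarith)
  have h4 : u * Real.log (ε / u) ≤ ε := by
    calc u * Real.log (ε / u) ≤ u * (ε / u) := mul_le_mul_of_nonneg_left h3 hu.le
      _ = ε := by field_simp
  have h5 : Real.log (1 / ε) ≤ Real.log (1 + 1 / ε) :=
    Real.log_le_log (by positivity) (by linarith)
  have h5' : 0 ≤ Real.log (1 / ε) := Real.log_nonneg h1le
  have hA : u * Real.log 2 ≤ ε * Real.log (1 + 1 / ε) :=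
    mul_le_mul huε hL2 (by linarith) hε.le
  have hB : u * Real.log (1 / ε) ≤ ε * Real.log (1 + 1 / ε) :=
    mul_le_mul huε (le_trans h5 le_rfl) h5' hε.le
  have hC : ε ≤ 2 * (ε * Real.log (1 + 1 / ε)) := by
    nlinarith [mul_nonneg hε.le (by linarith : (0:ℝ) ≤ 2 * Real.log (1 + 1 / ε) - 1)]
  calc u * Real.log (1 + 1 / u) ≤ u * Real.log (2 / u) :=
        mul_le_mul_of_nonneg_left h1 hu.le
    _ = u * Real.log 2 + u * Real.log (ε / u) + u * Real.log (1 / ε) := by rw [h2]; ring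
    _ ≤ 4 * (ε * Real.log (1 + 1 / ε)) := by linarith

private lemma aux_integral_deriv_zero (f : ℝ → ℝ) (hf : ContDiff ℝ 1 f)
    (hs : ∀ x, x ∉ Set.Icc (-1 : ℝ) 1 → f x = 0) :
    ∫ x, deriv f x = 0 := by
  have hsupp : Function.support f ⊆ Set.Icc (-1 : ℝ) 1 := fun x hx => by
    by_contra h; exact hx (hs x h)
  have hts : tsupport f ⊆ Set.Icc (-1 : ℝ) 1 := closure_minimal hsupp isClosed_Icc
  have hz' : ∀ x, x ∉ Set.Ioc (-2 : ℝ) 2 → deriv f x = 0 := by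
    intro x hx
    have hx' : x ∉ tsupport f := fun h => by
      have := hts h
      simp only [Set.mem_Icc] at this
      exact hx (by constructor <;> linarith [this.1, this.2])
    exact Function.notMem_support.mp fun h => hx' (support_deriv_subset h)
  rw [← setIntegral_eq_integral_of_forall_compl_eq_zero hz',
    ← intervalIntegral.integral_of_le (by norm_num : (-2 : ℝ) ≤ 2),
    intervalIntegral.integral_deriv_eq_sub
      (fun x _ => (hf.differentiable one_ne_zero).differentiableAt)
      ((hf.continuous_deriv le_rfl).intervalIntegrable _ _),
    hs 2 (by norm_num), hs (-2) (by norm_num), sub_zero]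

set_option maxHeartbeats 1000000 in
/-- for a bounded log-Zygmund function `a` and the mollification
`a_ε = ρ_ε * a`, one has `|∂_t² a_ε(t)| ≤ C ε⁻¹ log(1+γ+1/ε)` for all `γ ≥ 1`,
`ε ∈ (0,1]`, with `C` depending only on the log-Zygmund norm of `a`. -/
theorem mollified_logZygmund_second_deriv (ρ : ℝ → ℝ)
    (hρ_smooth : ContDiff ℝ (⊤ : ℕ∞) ρ) (hρ_even : ∀ s, ρ (-s) = ρ s)
    (hρ_nonneg : ∀ s, 0 ≤ ρ s) (hρ_le_one : ∀ s, ρ s ≤ 1)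
    (hρ_supp : Function.support ρ ⊆ Set.Icc (-1 : ℝ) 1)
    (hρ_int : ∫ s, ρ s = 1)
    (M K : ℝ) (hM : 0 ≤ M) (hK : 0 ≤ K) :
    ∃ C > 0, ∀ a : ℝ → ℝ, Measurable a →
      (∀ t, |a t| ≤ M) →
      (∀ t τ : ℝ, 0 < τ → τ < 1 →
        |a (t + τ) + a (t - τ) - 2 * a t| ≤ K * (τ * Real.log (1 + 1 / τ))) →
      ∀ γ : ℝ, 1 ≤ γ → ∀ ε : ℝ, 0 < ε → ε ≤ 1 → ∀ t : ℝ,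
        |deriv (deriv (fun t' => ∫ s, ε⁻¹ * ρ ((t' - s) / ε) * a s)) t|
          ≤ C * ε⁻¹ * Real.log (1 + γ + 1 / ε) := by
  classical
  have hlog2 : (0.6931471803 : ℝ) < Real.log 2 := Real.log_two_gt_d9
  -- smoothness of derivatives of ρ
  have hρtop : ContDiff ℝ (⊤ : ℕ∞) ρ := hρ_smooth.of_le (by simp)
  set ρ₁ : ℝ → ℝ := deriv ρ with hρ₁def
  have hρdiff : Differentiable ℝ ρ := (contDiff_infty_iff_deriv.mp hρtop).1
  have hρ₁top : ContDiff ℝ (⊤ : ℕ∞) ρ₁ := (contDiff_infty_iff_deriv.mp hρtop).2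
  set ρ₂ : ℝ → ℝ := deriv ρ₁ with hρ₂def
  have hρ₁diff : Differentiable ℝ ρ₁ := (contDiff_infty_iff_deriv.mp hρ₁top).1
  have hρ₂top : ContDiff ℝ (⊤ : ℕ∞) ρ₂ := (contDiff_infty_iff_deriv.mp hρ₁top).2
  -- supports
  have hts : tsupport ρ ⊆ Set.Icc (-1 : ℝ) 1 := closure_minimal hρ_supp isClosed_Icc
  have hts₁ : tsupport ρ₁ ⊆ Set.Icc (-1 : ℝ) 1 :=
    subset_trans (closure_minimal (subset_trans support_deriv_subset hts) isClosed_Icc) le_rfl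
  have hρ₁zero : ∀ x, x ∉ Set.Icc (-1 : ℝ) 1 → ρ₁ x = 0 := fun x hx =>
    Function.notMem_support.mp fun h => hx (hts (support_deriv_subset h))
  have hρ₂zero : ∀ x, x ∉ Set.Icc (-1 : ℝ) 1 → ρ₂ x = 0 := fun x hx =>
    Function.notMem_support.mp fun h => hx (hts₁ (support_deriv_subset h))
  -- evenness of ρ₂
  have hρ₁odd : ∀ x, ρ₁ (-x) = -ρ₁ x := by
    intro x
    have hfe : (fun y => ρ (-y)) = ρ := funext hρ_even
    have h := deriv_comp_neg (f := ρ) (-x)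
    rw [hfe, neg_neg] at h
    linarith [h]
  have hρ₂even : ∀ x, ρ₂ (-x) = ρ₂ x := by
    intro x
    have hfe : (fun y => ρ₁ (-y)) = fun y => -ρ₁ y := funext fun y => hρ₁odd y
    have h := deriv_comp_neg (f := ρ₁) (-x)
    rw [hfe, neg_neg] at h
    have h2 : deriv (fun y => -ρ₁ y) (-x) = -ρ₂ (-x) := by
      show deriv (-ρ₁) (-x) = _
      rw [deriv.neg]
    rw [h2] at h
    linarith [h]
  -- bound on ρ₂
  obtain ⟨B, hBnn, hBb⟩ : ∃ B : ℝ, 0 ≤ B ∧ ∀ x, |ρ₂ x| ≤ B := by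
    obtain ⟨B₀, hB₀⟩ : ∃ B₀, ∀ x ∈ Set.Icc (-1 : ℝ) 1, ‖ρ₂ x‖ ≤ B₀ :=
      isCompact_Icc.exists_bound_of_continuousOn hρ₂top.continuous.continuousOn
    refine ⟨max B₀ 0, le_max_right _ _, fun x => ?_⟩
    by_cases hx : x ∈ Set.Icc (-1 : ℝ) 1
    · exact le_trans (hB₀ x hx) (le_max_left _ _)
    · rw [hρ₂zero x hx]; simpa using (le_max_right B₀ 0)
  have hlog2pos : (0:ℝ) < Real.log 2 := by linarith
  obtain ⟨D, hDnn, hD4K, hDM⟩ :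
      ∃ D : ℝ, 0 ≤ D ∧ 4 * K ≤ D ∧ 4 * M ≤ D * Real.log 2 := by
    refine ⟨4 * K + 4 * M / Real.log 2, ?_, ?_, ?_⟩
    · have h1 : 0 ≤ 4 * M / Real.log 2 := by positivity
      linarith
    · have h1 : 0 ≤ 4 * M / Real.log 2 := by positivity
      linarith
    · have h1 : 4 * M / Real.log 2 * Real.log 2 = 4 * M :=
        div_mul_cancel₀ _ hlog2pos.ne'
      nlinarith [mul_nonneg (mul_nonneg (by norm_num : (0:ℝ) ≤ 4) hK) hlog2pos.le]
  refine ⟨D * B + 1, by nlinarith [mul_nonneg hDnn hBnn], ?_⟩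
  intro a ha haM haZ γ hγ ε hεpos hε1 t
  have hε0 : ε ≠ 0 := hεpos.ne'
  have hεinv : 0 < ε⁻¹ := by positivity
  have h1le : (1 : ℝ) ≤ 1 / ε := (le_div_iff₀ hεpos).mpr (by linarith)
  obtain ⟨Lε, hLεdef⟩ : ∃ x : ℝ, x = Real.log (1 + 1 / ε) := ⟨_, rfl⟩
  have hL2 : Real.log 2 ≤ Lε := by
    rw [hLεdef]; exact Real.log_le_log (by norm_num) (by linarith)
  have hLpos : 0 < Lε := lt_of_lt_of_le (by linarith) hL2
  have hLL' : Lε ≤ Real.log (1 + γ + 1 / ε) := by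
    rw [hLεdef]; exact Real.log_le_log (by positivity) (by linarith)
  -- mollifier and its derivatives
  set φ : ℝ → ℝ := fun x => ε⁻¹ * ρ (x / ε) with hφdef
  set φ₁ : ℝ → ℝ := fun x => ε⁻¹ * (ρ₁ (x / ε) * (1 / ε)) with hφ₁def
  set φ₂ : ℝ → ℝ := fun x => ε⁻¹ * (ρ₂ (x / ε) * (1 / ε) * (1 / ε)) with hφ₂def
  have hφd : ∀ x, HasDerivAt φ (φ₁ x) x := by
    intro x
    have h1 : HasDerivAt (fun y : ℝ => y / ε) (1 / ε) x := by
      simpa using (hasDerivAt_id x).div_const ε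
    have h2 : HasDerivAt ρ (ρ₁ (x / ε)) (x / ε) := (hρdiff (x / ε)).hasDerivAt
    exact (h2.comp x h1).const_mul ε⁻¹
  have hφ₁d : ∀ x, HasDerivAt φ₁ (φ₂ x) x := by
    intro x
    have h1 : HasDerivAt (fun y : ℝ => y / ε) (1 / ε) x := by
      simpa using (hasDerivAt_id x).div_const ε
    have h2 : HasDerivAt ρ₁ (ρ₂ (x / ε)) (x / ε) := (hρ₁diff (x / ε)).hasDerivAt
    exact (((h2.comp x h1).mul_const (1 / ε)).const_mul ε⁻¹)
  have hderivφ : deriv φ = φ₁ := funext fun x => (hφd x).deriv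
  have hderivφ₁ : deriv φ₁ = φ₂ := funext fun x => (hφ₁d x).deriv
  -- scaling of supports
  have hscale : ∀ x : ℝ, x ∉ Set.Icc (-ε) ε → x / ε ∉ Set.Icc (-1 : ℝ) 1 := by
    intro x hx hmem
    apply hx
    simp only [Set.mem_Icc] at hmem ⊢
    constructor
    · have := hmem.1
      rw [le_div_iff₀ hεpos] at this
      linarith
    · have := hmem.2
      rw [div_le_iff₀ hεpos] at this
      linarith
  have hIccsub : Set.Icc (-ε) ε ⊆ Set.Icc (-1 : ℝ) 1 :=
    Set.Icc_subset_Icc (by linarith) (by linarith)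
  have hscale1 : ∀ x : ℝ, x ∉ Set.Icc (-1 : ℝ) 1 → x / ε ∉ Set.Icc (-1 : ℝ) 1 := by
    intro x hx
    exact hscale x (fun h => hx (hIccsub h))
  have hφzero : ∀ x, x ∉ Set.Icc (-1 : ℝ) 1 → φ x = 0 := by
    intro x hx
    have : ρ (x / ε) = 0 :=
      Function.notMem_support.mp fun h => (hscale1 x hx) (hρ_supp h)
    simp [hφdef, this]
  have hφ₁zero : ∀ x, x ∉ Set.Icc (-1 : ℝ) 1 → φ₁ x = 0 := by
    intro x hx
    have : ρ₁ (x / ε) = 0 := hρ₁zero _ (hscale1 x hx)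
    simp [hφ₁def, this]
  have hφ₂zero : ∀ x, x ∉ Set.Icc (-ε) ε → φ₂ x = 0 := by
    intro x hx
    have : ρ₂ (x / ε) = 0 := hρ₂zero _ (hscale x hx)
    simp [hφ₂def, this]
  have hφc : HasCompactSupport φ :=
    HasCompactSupport.intro isCompact_Icc hφzero
  have hφ₁c : HasCompactSupport φ₁ :=
    HasCompactSupport.intro isCompact_Icc hφ₁zero
  have hφ₂c : HasCompactSupport φ₂ :=
    HasCompactSupport.intro (isCompact_Icc (a := -ε) (b := ε)) hφ₂zero
  have hφsm : ContDiff ℝ 1 φ := by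
    have : ContDiff ℝ 1 (fun x : ℝ => ρ (x / ε)) :=
      (hρ_smooth.of_le (by simp)).comp (contDiff_id.div_const ε)
    exact contDiff_const.mul this
  have hφ₁sm : ContDiff ℝ 1 φ₁ := by
    have : ContDiff ℝ 1 (fun x : ℝ => ρ₁ (x / ε)) :=
      (hρ₁top.of_le (by exact_mod_cast le_top)).comp (contDiff_id.div_const ε)
    exact contDiff_const.mul (this.mul contDiff_const)
  have hφ₂cont : Continuous φ₂ := by
    have : Continuous (fun x : ℝ => ρ₂ (x / ε)) :=
      hρ₂top.continuous.comp (continuous_id.div_const ε)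
    exact continuous_const.mul ((this.mul continuous_const).mul continuous_const)
  have hφ₂even : ∀ u, φ₂ (-u) = φ₂ u := by
    intro u
    simp only [hφ₂def, neg_div]
    rw [hρ₂even]
  -- local integrability of a
  have hloc : LocallyIntegrable a volume := by
    rw [locallyIntegrable_iff]
    intro k hk
    exact Measure.integrableOn_of_bounded hk.measure_lt_top.ne
      ha.aestronglyMeasurable (ae_of_all _ fun x => by
        simpa [Real.norm_eq_abs] using haM x)
  set L : ℝ →L[ℝ] ℝ →L[ℝ] ℝ := ContinuousLinearMap.mul ℝ ℝ with hLdef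
  have hconv_eq : ∀ (g : ℝ → ℝ) (x : ℝ),
      convolution a g L volume x = ∫ s, a s * g (x - s) := by
    intro g x; rw [convolution_def]; rfl
  have hF : (fun t' => ∫ s, ε⁻¹ * ρ ((t' - s) / ε) * a s)
      = convolution a φ L volume := by
    funext x
    rw [hconv_eq]
    refine integral_congr_ae (Filter.Eventually.of_forall fun s => ?_)
    simp only [hφdef]
    ring
  rw [hF]
  have e1 : deriv (convolution a φ L volume) = convolution a φ₁ L volume := by
    funext x
    rw [(HasCompactSupport.hasDerivAt_convolution_right L hloc hφc hφsm x).deriv,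
      hderivφ]
  rw [e1]
  have e2 : deriv (convolution a φ₁ L volume) t = convolution a φ₂ L volume t := by
    rw [(HasCompactSupport.hasDerivAt_convolution_right L hloc hφ₁c hφ₁sm t).deriv,
      hderivφ₁]
  rw [e2]
  -- rewrite as symmetric integral
  have hI : convolution a φ₂ L volume t = ∫ u, a (t - u) * φ₂ u := by
    rw [hconv_eq]
    rw [← integral_sub_left_eq_self (fun u => a (t - u) * φ₂ u) volume t]
    refine integral_congr_ae (Filter.Eventually.of_forall fun s => ?_)
    simp [sub_sub_cancel]
  have hI2 : (∫ u, a (t - u) * φ₂ u) = ∫ u, a (t + u) * φ₂ u := by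
    rw [← integral_neg_eq_self (fun u => a (t + u) * φ₂ u) volume]
    refine integral_congr_ae (Filter.Eventually.of_forall fun u => ?_)
    show a (t - u) * φ₂ u = a (t + -u) * φ₂ (-u)
    rw [hφ₂even u, ← sub_eq_add_neg]
  -- integrability
  have hint₂ : Integrable φ₂ := hφ₂cont.integrable_of_hasCompactSupport hφ₂c
  have hmeas_plus : AEStronglyMeasurable (fun u => a (t + u) * φ₂ u) volume :=
    ((ha.comp (measurable_const.add measurable_id)).mul
      hφ₂cont.measurable).aestronglyMeasurable
  have hmeas_minus : AEStronglyMeasurable (fun u => a (t - u) * φ₂ u) volume :=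
    ((ha.comp (measurable_const.sub measurable_id)).mul
      hφ₂cont.measurable).aestronglyMeasurable
  have hint_plus : Integrable (fun u => a (t + u) * φ₂ u) := by
    refine Integrable.mono' (hint₂.norm.const_mul M) hmeas_plus
      (ae_of_all _ fun u => ?_)
    rw [Real.norm_eq_abs, abs_mul]
    exact mul_le_mul_of_nonneg_right (haM _) (abs_nonneg _)
  have hint_minus : Integrable (fun u => a (t - u) * φ₂ u) := by
    refine Integrable.mono' (hint₂.norm.const_mul M) hmeas_minus
      (ae_of_all _ fun u => ?_)
    rw [Real.norm_eq_abs, abs_mul]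
    exact mul_le_mul_of_nonneg_right (haM _) (abs_nonneg _)
  have hint_const : Integrable (fun u => 2 * a t * φ₂ u) := hint₂.const_mul _
  -- ∫ φ₂ = 0
  have hφ₂int0 : (∫ u, φ₂ u) = 0 := by
    have : φ₂ = deriv φ₁ := hderivφ₁.symm
    rw [this]
    exact aux_integral_deriv_zero φ₁ hφ₁sm hφ₁zero
  have hzero : (∫ u, 2 * a t * φ₂ u) = 0 := by
    rw [integral_const_mul, hφ₂int0, mul_zero]
  set J : ℝ := ∫ u, (a (t + u) + a (t - u) - 2 * a t) * φ₂ u with hJdef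
  have hsplit : J = (∫ u, a (t + u) * φ₂ u) + (∫ u, a (t - u) * φ₂ u)
      - ∫ u, 2 * a t * φ₂ u := by
    have hs1 : (∫ u, (a (t + u) * φ₂ u + a (t - u) * φ₂ u) - 2 * a t * φ₂ u)
        = (∫ u, a (t + u) * φ₂ u + a (t - u) * φ₂ u) - ∫ u, 2 * a t * φ₂ u :=
      integral_sub (hint_plus.add hint_minus) hint_const
    have hs2 : (∫ u, a (t + u) * φ₂ u + a (t - u) * φ₂ u)
        = (∫ u, a (t + u) * φ₂ u) + ∫ u, a (t - u) * φ₂ u :=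
      integral_add hint_plus hint_minus
    have hptw : (fun u => (a (t + u) + a (t - u) - 2 * a t) * φ₂ u)
        = fun u => (a (t + u) * φ₂ u + a (t - u) * φ₂ u) - 2 * a t * φ₂ u :=
      funext fun u => by ring
    rw [hJdef, hptw, hs1, hs2]
  have hhalf : convolution a φ₂ L volume t = 2⁻¹ * J := by
    rw [hI, hsplit, hzero, ← hI2]
    ring
  rw [hhalf]
  -- bound the integrand on [-ε, ε]
  have hΔ : ∀ x ∈ Set.Icc (-ε) ε,
      |a (t + x) + a (t - x) - 2 * a t| ≤ D * (ε * Lε) := by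
    intro x hx
    simp only [Set.mem_Icc] at hx
    have hDLnn : 0 ≤ D * (ε * Lε) :=
      mul_nonneg hDnn (mul_nonneg hεpos.le hLpos.le)
    rcases eq_or_ne x 0 with rfl | hx0
    · simp only [add_zero, sub_zero]
      have : a t + a t - 2 * a t = 0 := by ring
      rw [this, abs_zero]
      exact hDLnn
    · have hτpos : 0 < |x| := abs_pos.mpr hx0
      have hτle : |x| ≤ ε := abs_le.mpr ⟨hx.1, hx.2⟩
      have hkey : |a (t + |x|) + a (t - |x|) - 2 * a t|
          = |a (t + x) + a (t - x) - 2 * a t| := by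
        rcases le_or_gt 0 x with h | h
        · rw [abs_of_nonneg h]
        · rw [abs_of_neg h]
          have e1 : t + -x = t - x := by ring
          have e2 : t - -x = t + x := by ring
          rw [e1, e2]
          congr 1
          ring
      by_cases hτ1 : |x| < 1
      · have h1 := haZ t |x| hτpos hτ1
        rw [hkey] at h1
        have h2 := aux_log_bound |x| ε hτpos hτ1 hτle hε1
        rw [← hLεdef] at h2
        calc |a (t + x) + a (t - x) - 2 * a t| ≤ K * (|x| * Real.log (1 + 1 / |x|)) := h1
          _ ≤ K * (4 * (ε * Lε)) := mul_le_mul_of_nonneg_left h2 hK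
          _ = 4 * K * (ε * Lε) := by ring
          _ ≤ D * (ε * Lε) := by
              have h4 : 0 ≤ ε * Lε := mul_nonneg hεpos.le hLpos.le
              exact mul_le_mul_of_nonneg_right hD4K h4
      · have hτ1' : |x| = 1 := le_antisymm (le_trans hτle hε1) (not_lt.mp hτ1)
        have hε1' : ε = 1 := le_antisymm hε1 (hτ1' ▸ hτle)
        have hM1 := haM (t + x); have hM2 := haM (t - x); have hM3 := haM t
        rw [abs_le] at hM1 hM2 hM3
        have h4M : |a (t + x) + a (t - x) - 2 * a t| ≤ 4 * M := by
          rw [abs_le]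
          constructor <;> linarith [hM1.1, hM1.2, hM2.1, hM2.2, hM3.1, hM3.2]
        have hLεval : Lε = Real.log 2 := by
          rw [hLεdef, hε1']; norm_num
        calc |a (t + x) + a (t - x) - 2 * a t| ≤ 4 * M := h4M
          _ ≤ D * (ε * Lε) := by
              rw [hε1', hLεval, one_mul]
              exact hDM
  have hφ₂b : ∀ x, |φ₂ x| ≤ B * (ε⁻¹ * ε⁻¹ * ε⁻¹) := by
    intro x
    have h3 : |φ₂ x| = |ρ₂ (x / ε)| * (ε⁻¹ * ε⁻¹ * ε⁻¹) := by
      simp only [hφ₂def, one_div, abs_mul, abs_of_pos hεinv]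
      ring
    rw [h3]
    exact mul_le_mul_of_nonneg_right (hBb (x / ε)) (by positivity)
  have hbound : ∀ x ∈ Set.Icc (-ε) ε,
      ‖(a (t + x) + a (t - x) - 2 * a t) * φ₂ x‖
        ≤ D * (ε * Lε) * (B * (ε⁻¹ * ε⁻¹ * ε⁻¹)) := by
    intro x hx
    rw [Real.norm_eq_abs, abs_mul]
    exact mul_le_mul (hΔ x hx) (hφ₂b x) (abs_nonneg _) (by positivity)
  have hJset : J = ∫ u in Set.Icc (-ε) ε, (a (t + u) + a (t - u) - 2 * a t) * φ₂ u := by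
    rw [hJdef]
    exact (setIntegral_eq_integral_of_forall_compl_eq_zero fun x hx => by
      rw [hφ₂zero x hx, mul_zero]).symm
  have hvol : (volume (Set.Icc (-ε) ε)).toReal = 2 * ε := by
    rw [Real.volume_Icc, ENNReal.toReal_ofReal (by linarith)]
    ring
  have hJb : |J| ≤ D * (ε * Lε) * (B * (ε⁻¹ * ε⁻¹ * ε⁻¹)) * (2 * ε) := by
    rw [hJset, ← Real.norm_eq_abs, ← hvol]
    exact norm_setIntegral_le_of_norm_le_const measure_Icc_lt_top hbound
  have hEq : D * (ε * Lε) * (B * (ε⁻¹ * ε⁻¹ * ε⁻¹)) * (2 * ε) * 2⁻¹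
      = D * B * Lε * ε⁻¹ := by
    field_simp
  calc |2⁻¹ * J| = 2⁻¹ * |J| := by rw [abs_mul]; norm_num
    _ ≤ 2⁻¹ * (D * (ε * Lε) * (B * (ε⁻¹ * ε⁻¹ * ε⁻¹)) * (2 * ε)) := by
        have : (0:ℝ) ≤ 2⁻¹ := by norm_num
        exact mul_le_mul_of_nonneg_left hJb this
    _ = D * B * Lε * ε⁻¹ := by rw [← hEq]; ring
    _ ≤ (D * B + 1) * ε⁻¹ * Real.log (1 + γ + 1 / ε) := by
        have hL'pos : 0 < Real.log (1 + γ + 1 / ε) := lt_of_lt_of_le hLpos hLL'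
        have hDBnn : 0 ≤ D * B := mul_nonneg hDnn hBnn
        have h1 : D * B * Lε ≤ D * B * Real.log (1 + γ + 1 / ε) :=
          mul_le_mul_of_nonneg_left hLL' hDBnn
        have h2 : D * B * Real.log (1 + γ + 1 / ε)
            ≤ (D * B + 1) * Real.log (1 + γ + 1 / ε) :=
          mul_le_mul_of_nonneg_right (by linarith) hL'pos.le
        calc D * B * Lε * ε⁻¹ ≤ D * B * Real.log (1 + γ + 1 / ε) * ε⁻¹ :=
              mul_le_mul_of_nonneg_right h1 hεinv.le
          _ ≤ (D * B + 1) * Real.log (1 + γ + 1 / ε) * ε⁻¹ :=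
              mul_le_mul_of_nonneg_right h2 hεinv.le
          _ = (D * B + 1) * ε⁻¹ * Real.log (1 + γ + 1 / ε) := by ring
end

section
/- The function σ ↦ σ log²(1 + γ + 1/σ) is increasing on (0, 1] for every γ ≥ 1. -/
/-!
Writing `u = c + 1/σ`, the derivative of `σ log²(c + 1/σ)` is `log u · (log u - 2/(σu))` with
`σu = σc + 1`. The bound `log u ≥ 2 - e/u` (that is, `log y ≥ 1 - 1/y` at `y = u/e`) gives
`σu · log u ≥ 2 + σ(2c - e)`, so the derivative is positive on all of `(0, ∞)` as soon as `2c > e`;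
for `c = 1 + γ ≥ 2` this holds.
-/

open Real Set

lemma two_sub_exp_one_div_le_log {u : ℝ} (hu : 0 < u) : 2 - exp 1 / u ≤ log u := by
  have h := one_sub_inv_le_log_of_pos (div_pos hu (exp_pos 1))
  rw [inv_div, log_div hu.ne' (exp_ne_zero 1), log_exp] at h
  linarith

lemma two_div_mul_add_one_lt_log_add_inv {c x : ℝ} (hc : exp 1 < 2 * c) (hx : 0 < x) :
    2 / (x * c + 1) < log (c + 1 / x) := by
  have hc0 : 0 < c := by linarith [exp_pos 1]
  have hu : 0 < c + 1 / x := by positivity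
  have hxu : x * (c + 1 / x) = x * c + 1 := by field_simp
  have hlog := two_sub_exp_one_div_le_log hu
  have hmul : (x * c + 1) * (2 - exp 1 / (c + 1 / x)) = 2 * (x * c + 1) - x * exp 1 := by
    rw [← hxu]; field_simp
  rw [div_lt_iff₀ (by positivity)]
  nlinarith [mul_le_mul_of_nonneg_left hlog (by positivity : (0 : ℝ) ≤ x * c + 1)]

lemma hasDerivAt_mul_sq_log_add_inv {c x : ℝ} (hx : 0 < x) (hu : 0 < c + 1 / x) :
    HasDerivAt (fun σ => σ * log (c + 1 / σ) ^ 2)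
      (log (c + 1 / x) * (log (c + 1 / x) - 2 / (x * c + 1))) x := by
  have hinner : HasDerivAt (fun σ => c + 1 / σ) (-1 / x ^ 2) x := by
    simpa [one_div, neg_div] using (hasDerivAt_inv hx.ne').const_add c
  refine ((hasDerivAt_id' x).mul ((hinner.log hu.ne').pow 2)).congr_deriv ?_
  simp only [Pi.pow_apply]
  field_simp
  ring

lemma strictMonoOn_mul_sq_log_add_inv {c : ℝ} (hc : exp 1 < 2 * c) :
    StrictMonoOn (fun σ => σ * log (c + 1 / σ) ^ 2) (Ioi 0) := by
  have hc0 : 0 < c := by linarith [exp_pos 1]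
  have hu : ∀ x ∈ Ioi (0 : ℝ), 0 < c + 1 / x := fun x hx => by
    have : 0 < x := hx
    positivity
  have hderiv : ∀ x ∈ Ioi (0 : ℝ), HasDerivAt (fun σ => σ * log (c + 1 / σ) ^ 2)
      (log (c + 1 / x) * (log (c + 1 / x) - 2 / (x * c + 1))) x :=
    fun x hx => hasDerivAt_mul_sq_log_add_inv hx (hu x hx)
  refine strictMonoOn_of_hasDerivWithinAt_pos (convex_Ioi 0)
    (fun x hx => (hderiv x hx).continuousAt.continuousWithinAt)
    (fun x hx => (hderiv x (interior_subset hx)).hasDerivWithinAt) fun x hx => ?_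
  rw [interior_Ioi] at hx
  have hgap := two_div_mul_add_one_lt_log_add_inv hc hx
  have hpos : 0 < 2 / (x * c + 1) := by
    have : 0 < x := hx
    positivity
  exact mul_pos (hpos.trans hgap) (sub_pos.mpr hgap)

/-- `σ ↦ σ log²(1+γ+1/σ)` is increasing on `(0,1]` for every `γ ≥ 1`. -/
theorem strictMonoOn_mul_sq_log (γ : ℝ) (hγ : 1 ≤ γ) :
    StrictMonoOn (fun σ : ℝ => σ * (Real.log (1 + γ + 1 / σ)) ^ 2) (Set.Ioc 0 1) :=
  (strictMonoOn_mul_sq_log_add_inv (by linarith [exp_one_lt_three])).mono Ioc_subset_Ioi_self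
end

section
/- Let u be a tempered distribution on ℝ^N whose Littlewood-Paley blocks satisfy ‖Δ_k u‖_{L^∞} ≤ M 2^{-k}(k+1) for all k ≥ 0. Then u is log-Zygmund: there exists C (depending only on the Littlewood-Paley decomposition and dimension) such that for all x, y with 0 < |y| < 1, |u(x+y)+u(x-y)-2u(x)| ≤ C M |y| log(1+1/|y|). -/
/-!
Split the Littlewood–Paley series of the second difference at the dyadic scale `2^m ≈ 1/|y|`.
Below that scale, second-order Taylor and Bernstein give `|Δ²_y u_k| ≲ M 2^k (k+1) |y|²`, a sum
dominated by its last term `M m |y|`; above it, the sup bound gives `|Δ²_y u_k| ≲ M 2^{-k} (k+1)`,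
a tail of size `M (m+2) 2^{-m} ≲ M (m+2) |y|`. Since `m ≲ log (1 + 1/|y|)`, both parts are
`O(M |y| log (1 + 1/|y|))`.
-/

open Finset Real

theorem norm_second_difference_le_of_norm_iteratedFDeriv_two_le
    {E F : Type*} [NormedAddCommGroup E] [NormedSpace ℝ E]
    [NormedAddCommGroup F] [NormedSpace ℝ F] {f : E → F} (hf : ContDiff ℝ 2 f) {K : ℝ}
    (hK : ∀ z, ‖iteratedFDeriv ℝ 2 f z‖ ≤ K) (x y : E) :
    ‖f (x + y) + f (x - y) - (2 : ℝ) • f x‖ ≤ K * ‖y‖ ^ 2 := by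
  have hdiff : Differentiable ℝ f := hf.differentiable two_ne_zero
  have hdiff_fderiv : Differentiable ℝ (fderiv ℝ f) :=
    (hf.fderiv_right (m := 1) le_rfl).differentiable one_ne_zero
  have hD2 : ∀ z, ‖fderiv ℝ (fderiv ℝ f) z‖ ≤ K := fun z => by
    simpa only [norm_iteratedFDeriv_zero, ← norm_iteratedFDeriv_fderiv] using hK z
  have hD1 : ∀ z, ‖fderiv ℝ f (z + y) - fderiv ℝ f z‖ ≤ K * ‖y‖ := fun z => by
    simpa using convex_univ.norm_image_sub_le_of_norm_fderiv_le (fun w _ => hdiff_fderiv w)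
      (fun w _ => hD2 w) (Set.mem_univ z) (Set.mem_univ (z + y))
  -- the second difference is the first difference of `z ↦ f (z + y) - f z` between `x - y` and `x`
  have hderiv : ∀ z, HasFDerivAt (fun z => f (z + y) - f z)
      (fderiv ℝ f (z + y) - fderiv ℝ f z) z := fun z =>
    ((hdiff (z + y)).hasFDerivAt.comp z ((hasFDerivAt_id z).add_const y)).sub
      (hdiff z).hasFDerivAt
  have h := convex_univ.norm_image_sub_le_of_norm_hasFDerivWithin_le
    (fun z _ => (hderiv z).hasFDerivWithinAt) (fun z _ => hD1 z)
    (Set.mem_univ (x - y)) (Set.mem_univ x)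
  rw [sub_sub_cancel, sub_add_cancel] at h
  calc ‖f (x + y) + f (x - y) - (2 : ℝ) • f x‖ = ‖f (x + y) - f x - (f x - f (x - y))‖ := by
        rw [two_smul]; congr 1; abel
    _ ≤ K * ‖y‖ * ‖y‖ := h
    _ = K * ‖y‖ ^ 2 := by ring

theorem abs_second_difference_le_of_abs_le {E : Type*} [AddGroup E] {f : E → ℝ} {B : ℝ}
    (hB : ∀ z, |f z| ≤ B) (x y : E) : |f (x + y) + f (x - y) - 2 * f x| ≤ 4 * B := by
  have h := abs_add_three (f (x + y)) (f (x - y)) (-(2 * f x))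
  rw [← sub_eq_add_neg, abs_neg, abs_mul, abs_two] at h
  linarith [hB (x + y), hB (x - y), hB x]

theorem sum_range_two_pow_mul_succ_le (m : ℕ) :
    ∑ k ∈ range m, (2 : ℝ) ^ k * (k + 1) ≤ m * 2 ^ m := by
  induction m with
  | zero => simp
  | succ m ih =>
    rw [sum_range_succ, pow_succ]
    push_cast
    nlinarith [pow_pos (two_pos : (0 : ℝ) < 2) m]

theorem hasSum_succ_mul_half_pow_nat_add (m : ℕ) :
    HasSum (fun k : ℕ => (1 / 2 : ℝ) ^ (k + m) * ((k + m : ℕ) + 1))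
      (2 * (m + 2) * (1 / 2) ^ m) := by
  have h := ((hasSum_coe_mul_geometric_of_norm_lt_one (r := (1 / 2 : ℝ)) (by norm_num)).add
    (hasSum_geometric_two.mul_left ((m : ℝ) + 1))).mul_left ((1 / 2 : ℝ) ^ m)
  have hvalue : (1 / 2 : ℝ) ^ m * (1 / 2 / (1 - 1 / 2) ^ 2 + (m + 1) * 2)
      = 2 * (m + 2) * (1 / 2) ^ m := by norm_num; ring
  rw [hvalue] at h
  refine h.congr_fun fun k => ?_
  push_cast
  ring

theorem abs_le_of_hasSum_of_dyadic_bounds {D : ℕ → ℝ} {S a b r : ℝ} {m : ℕ}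
    (hD : HasSum D S) (ha : 0 ≤ a) (hb : 0 ≤ b)
    (hlow : ∀ k : ℕ, |D k| ≤ a * 2 ^ k * (k + 1) * r ^ 2)
    (hhigh : ∀ k : ℕ, |D k| ≤ b * (1 / 2) ^ k * (k + 1))
    (hm₁ : 1 ≤ 2 ^ m * r) (hm₂ : 2 ^ m * r ≤ 2) :
    |S| ≤ 2 * (a + b) * r * (m + 2) := by
  have hr : 0 ≤ r := (pos_of_mul_pos_right (a := (2 : ℝ) ^ m) (by linarith) (by positivity)).le
  have hhalf : (1 / 2 : ℝ) ^ m ≤ r := by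
    calc (1 / 2 : ℝ) ^ m ≤ (1 / 2) ^ m * (2 ^ m * r) := le_mul_of_one_le_right (by positivity) hm₁
      _ = r := by rw [← mul_assoc, ← mul_pow]; norm_num
  have hlowsum : |∑ k ∈ range m, D k| ≤ 2 * a * r * m :=
    calc |∑ k ∈ range m, D k| ≤ ∑ k ∈ range m, |D k| := abs_sum_le_sum_abs _ _
      _ ≤ ∑ k ∈ range m, a * r ^ 2 * (2 ^ k * (k + 1)) :=
          sum_le_sum fun k _ => (hlow k).trans_eq (by ring)
      _ = a * r ^ 2 * ∑ k ∈ range m, (2 : ℝ) ^ k * (k + 1) := (mul_sum _ _ _).symm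
      _ ≤ a * r ^ 2 * (m * 2 ^ m) := by gcongr; exact sum_range_two_pow_mul_succ_le m
      _ = a * r * m * (2 ^ m * r) := by ring
      _ ≤ a * r * m * 2 := by gcongr
      _ = 2 * a * r * m := by ring
  have hhighsum : |∑' k, D (k + m)| ≤ 2 * b * r * (m + 2) :=
    calc |∑' k, D (k + m)| ≤ b * (2 * (m + 2) * (1 / 2) ^ m) := by
          simp only [← Real.norm_eq_abs] at hhigh ⊢
          refine tsum_of_norm_bounded ((hasSum_succ_mul_half_pow_nat_add m).mul_left b) fun k => ?_
          exact (hhigh (k + m)).trans_eq (by ring)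
      _ ≤ b * (2 * (m + 2) * r) := by gcongr
      _ = 2 * b * r * (m + 2) := by ring
  rw [← hD.tsum_eq, ← hD.summable.sum_add_tsum_nat_add m]
  calc |∑ k ∈ range m, D k + ∑' k, D (k + m)|
      ≤ |∑ k ∈ range m, D k| + |∑' k, D (k + m)| := abs_add_le _ _
    _ ≤ 2 * a * r * m + 2 * b * r * (m + 2) := add_le_add hlowsum hhighsum
    _ ≤ 2 * (a + b) * r * (m + 2) := by nlinarith

theorem exists_nat_dyadic_scale {r : ℝ} (hr₀ : 0 < r) (hr₁ : r < 1) :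
    ∃ m : ℕ, 1 ≤ 2 ^ m * r ∧ 2 ^ m * r ≤ 2 ∧ (m + 2 : ℝ) ≤ 4 / log 2 * log (1 + 1 / r) := by
  obtain ⟨n, hn, hn'⟩ := exists_nat_pow_near (one_le_one_div hr₀ hr₁.le) one_lt_two
  have hlog2 : 0 < log 2 := log_pos one_lt_two
  have hlog : log 2 ≤ log (1 + 1 / r) :=
    log_le_log two_pos (by linarith [one_le_one_div hr₀ hr₁.le])
  have hn_log : n * log 2 ≤ log (1 + 1 / r) := by
    rw [← log_pow]
    exact log_le_log (by positivity) (by linarith)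
  refine ⟨n + 1, ((div_lt_iff₀ hr₀).mp hn').le, ?_, ?_⟩
  · rw [pow_succ, mul_right_comm]
    linarith [(le_div_iff₀ hr₀).mp hn]
  · rw [div_mul_eq_mul_div, le_div_iff₀ hlog2]
    push_cast
    linarith

/-- if `u` admits a Littlewood-Paley type decomposition
`u = Σ_k u_k` with `‖u_k‖_{L^∞} ≤ M 2^{-k}(k+1)` and the Bernstein bound
`‖∇² u_k‖_{L^∞} ≤ A 2^{2k} · M 2^{-k}(k+1)` (with `A` the Bernstein constant
of the decomposition), then `u` is log-Zygmund:
`|u(x+y)+u(x-y)-2u(x)| ≤ C M |y| log(1+1/|y|)` for `0 < |y| < 1`,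
with `C` depending only on the decomposition (i.e. on `A`) and the dimension. -/
theorem logZygmund_of_dyadic_bounds (N : ℕ) (A : ℝ) (hA : 0 ≤ A) :
    ∃ C > 0, ∀ (M : ℝ), 0 ≤ M →
      ∀ (u : EuclideanSpace ℝ (Fin N) → ℝ) (uk : ℕ → EuclideanSpace ℝ (Fin N) → ℝ),
      (∀ k, ContDiff ℝ 2 (uk k)) →
      (∀ x, HasSum (fun k => uk k x) (u x)) →
      (∀ k x, |uk k x| ≤ M * (2 : ℝ) ^ (-(k : ℝ)) * ((k : ℝ) + 1)) →
      (∀ k x, ‖iteratedFDeriv ℝ 2 (uk k) x‖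
          ≤ A * (2 : ℝ) ^ (2 * (k : ℝ)) * (M * (2 : ℝ) ^ (-(k : ℝ)) * ((k : ℝ) + 1))) →
      ∀ x y : EuclideanSpace ℝ (Fin N), 0 < ‖y‖ → ‖y‖ < 1 →
        |u (x + y) + u (x - y) - 2 * u x|
          ≤ C * M * (‖y‖ * Real.log (1 + 1 / ‖y‖)) := by
  refine ⟨8 * (A + 4) / log 2, by have := log_pos one_lt_two; positivity, ?_⟩
  intro M hM u uk hsmooth hsum hsize hbernstein x y hy₀ hy₁
  have hneg : ∀ k : ℕ, (2 : ℝ) ^ (-(k : ℝ)) = (1 / 2) ^ k := fun k => by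
    rw [rpow_neg zero_le_two, rpow_natCast, one_div, inv_pow]
  have hsecondDeriv : ∀ k z, ‖iteratedFDeriv ℝ 2 (uk k) z‖ ≤ A * M * 2 ^ k * (k + 1) := by
    intro k z
    have hpow : (2 : ℝ) ^ (2 * (k : ℝ)) * 2 ^ (-(k : ℝ)) = 2 ^ k := by
      rw [← rpow_add two_pos, ← rpow_natCast]; ring_nf
    refine (hbernstein k z).trans_eq ?_
    linear_combination A * M * (k + 1) * hpow
  obtain ⟨m, hm₁, hm₂, hm_log⟩ := exists_nat_dyadic_scale hy₀ hy₁
  have hsecond := abs_le_of_hasSum_of_dyadic_bounds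
    (((hsum (x + y)).add (hsum (x - y))).sub ((hsum x).mul_left 2))
    (mul_nonneg hA hM) (by positivity : (0 : ℝ) ≤ 4 * M)
    (fun k => by simpa only [Real.norm_eq_abs, smul_eq_mul] using
      norm_second_difference_le_of_norm_iteratedFDeriv_two_le (hsmooth k) (hsecondDeriv k) x y)
    (fun k => (abs_second_difference_le_of_abs_le (fun z => (hsize k z).trans_eq (by rw [hneg]))
      x y).trans_eq (by ring))
    hm₁ hm₂
  calc |u (x + y) + u (x - y) - 2 * u x| ≤ 2 * (A + 4) * M * ‖y‖ * (m + 2) :=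
        hsecond.trans_eq (by ring)
    _ ≤ 2 * (A + 4) * M * ‖y‖ * (4 / log 2 * log (1 + 1 / ‖y‖)) := by gcongr
    _ = 8 * (A + 4) / log 2 * M * (‖y‖ * log (1 + 1 / ‖y‖)) := by ring
end

section
/- Let (e_ν)_{ν≥0} be nonnegative and suppose for constants C₁, C₂ ≥ 0 and functions f_ν ≥ 0 that (d/dt)e_ν(t) ≤ C₁(ν+1)e_ν(t) + C₂ e_ν(t)^{1/2} f_ν(t). Fix θ ∈ ℝ, β ≥ C₁/2, and define E(t) = Σ_ν e^{-2β(ν+1)t} 2^{-2νθ} e_ν(t). Then, assuming the series and its term-by-term derivative converge, (d/dt)E(t) ≤ C₂ E(t)^{1/2} (Σ_ν e^{-2β(ν+1)t} 2^{-2νθ} f_ν(t)²)^{1/2}. -/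
/-- Cauchy–Schwarz for tsums of nonnegative reals. -/
lemma tsum_mul_le_sqrt_mul_sqrt_aux (u v : ℕ → ℝ) (hu : ∀ n, 0 ≤ u n) (hv : ∀ n, 0 ≤ v n)
    (h2u : Summable (fun n => u n ^ 2)) (h2v : Summable (fun n => v n ^ 2)) :
    ∑' n, u n * v n ≤ Real.sqrt (∑' n, u n ^ 2) * Real.sqrt (∑' n, v n ^ 2) := by
  have hsum : Summable (fun n => u n * v n) := by
    apply Summable.of_nonneg_of_le (fun n => mul_nonneg (hu n) (hv n))
      (fun n => ?_) ((h2u.add h2v).div_const 2)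
    have := sq_nonneg (u n - v n)
    nlinarith [sq_nonneg (u n - v n)]
  refine Summable.tsum_le_of_sum_le hsum fun s => ?_
  calc ∑ n ∈ s, u n * v n
      ≤ Real.sqrt (∑ n ∈ s, u n ^ 2) * Real.sqrt (∑ n ∈ s, v n ^ 2) :=
        Real.sum_mul_le_sqrt_mul_sqrt s u v
    _ ≤ Real.sqrt (∑' n, u n ^ 2) * Real.sqrt (∑' n, v n ^ 2) :=
        mul_le_mul (Real.sqrt_le_sqrt (Summable.sum_le_tsum s (fun n _ => sq_nonneg _) h2u))
          (Real.sqrt_le_sqrt (Summable.sum_le_tsum s (fun n _ => sq_nonneg _) h2v))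
          (Real.sqrt_nonneg _) (Real.sqrt_nonneg _)


/-- weighted summation of the localized energies: if each
localized energy satisfies `e_ν' ≤ C₁(ν+1)e_ν + C₂ e_ν^{1/2} f_ν` and
`β ≥ C₁/2`, then the total energy
`E(t) = Σ_ν e^{-2β(ν+1)t} 2^{-2νθ} e_ν(t)` satisfies
`E'(t) ≤ C₂ E(t)^{1/2} (Σ_ν e^{-2β(ν+1)t} 2^{-2νθ} f_ν(t)²)^{1/2}`
(assuming the relevant series converge and the term-by-term derivative is
valid). -/
theorem weighted_energy_sum (C₁ C₂ θ β : ℝ) (hC₁ : 0 ≤ C₁) (hC₂ : 0 ≤ C₂)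
    (hβ : C₁ / 2 ≤ β)
    (e f : ℕ → ℝ → ℝ)
    (he_nonneg : ∀ ν t, 0 ≤ e ν t) (hf_nonneg : ∀ ν t, 0 ≤ f ν t)
    (he_diff : ∀ ν, Differentiable ℝ (e ν))
    (hineq : ∀ ν t, deriv (e ν) t
      ≤ C₁ * ((ν : ℝ) + 1) * e ν t + C₂ * Real.sqrt (e ν t) * f ν t)
    (t : ℝ)
    (hsum : Summable (fun ν : ℕ =>
      Real.exp (-2 * β * ((ν : ℝ) + 1) * t) * (2 : ℝ) ^ (-2 * (ν : ℝ) * θ) * e ν t))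
    (hsumf : Summable (fun ν : ℕ =>
      Real.exp (-2 * β * ((ν : ℝ) + 1) * t) * (2 : ℝ) ^ (-2 * (ν : ℝ) * θ) * (f ν t) ^ 2))
    (hsumν : Summable (fun ν : ℕ => ((ν : ℝ) + 1) *
      Real.exp (-2 * β * ((ν : ℝ) + 1) * t) * (2 : ℝ) ^ (-2 * (ν : ℝ) * θ) * e ν t))
    (hsumd : Summable (fun ν : ℕ =>
      deriv (fun s => Real.exp (-2 * β * ((ν : ℝ) + 1) * s)
        * (2 : ℝ) ^ (-2 * (ν : ℝ) * θ) * e ν s) t))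
    (hE : HasDerivAt (fun s => ∑' ν : ℕ,
        Real.exp (-2 * β * ((ν : ℝ) + 1) * s) * (2 : ℝ) ^ (-2 * (ν : ℝ) * θ) * e ν s)
      (∑' ν : ℕ, deriv (fun s => Real.exp (-2 * β * ((ν : ℝ) + 1) * s)
        * (2 : ℝ) ^ (-2 * (ν : ℝ) * θ) * e ν s) t) t) :
    deriv (fun s => ∑' ν : ℕ,
        Real.exp (-2 * β * ((ν : ℝ) + 1) * s) * (2 : ℝ) ^ (-2 * (ν : ℝ) * θ) * e ν s) t
      ≤ C₂ * Real.sqrt (∑' ν : ℕ,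
          Real.exp (-2 * β * ((ν : ℝ) + 1) * t) * (2 : ℝ) ^ (-2 * (ν : ℝ) * θ) * e ν t)
        * Real.sqrt (∑' ν : ℕ,
          Real.exp (-2 * β * ((ν : ℝ) + 1) * t) * (2 : ℝ) ^ (-2 * (ν : ℝ) * θ) * (f ν t) ^ 2) := by
    -- abbreviations
  set g : ℕ → ℝ := fun ν => Real.exp (-2 * β * ((ν : ℝ) + 1) * t) * (2 : ℝ) ^ (-2 * (ν : ℝ) * θ) * e ν t with hg
  set h : ℕ → ℝ := fun ν => Real.exp (-2 * β * ((ν : ℝ) + 1) * t) * (2 : ℝ) ^ (-2 * (ν : ℝ) * θ) * (f ν t) ^ 2 with hh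
  set u : ℕ → ℝ := fun ν => Real.sqrt (g ν) with hu
  set v : ℕ → ℝ := fun ν => Real.sqrt (h ν) with hv
  have hgnn : ∀ ν, 0 ≤ g ν := fun ν => by
    have := he_nonneg ν t; positivity
  have hhnn : ∀ ν, 0 ≤ h ν := fun ν => by positivity
  have hu2 : ∀ ν, u ν ^ 2 = g ν := fun ν => Real.sq_sqrt (hgnn ν)
  have hv2 : ∀ ν, v ν ^ 2 = h ν := fun ν => Real.sq_sqrt (hhnn ν)
  -- product identity : u ν * v ν = exp * 2^ * √e * f
  have huv : ∀ ν, u ν * v ν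
      = Real.exp (-2 * β * ((ν : ℝ) + 1) * t) * (2 : ℝ) ^ (-2 * (ν : ℝ) * θ)
        * (Real.sqrt (e ν t) * f ν t) := by
    intro ν
    have h1 : Real.sqrt (e ν t) ^ 2 = e ν t := Real.sq_sqrt (he_nonneg ν t)
    have hnn : (0:ℝ) ≤ Real.exp (-2 * β * ((ν : ℝ) + 1) * t) * (2 : ℝ) ^ (-2 * (ν : ℝ) * θ)
        * (Real.sqrt (e ν t) * f ν t) := by
      have h2 : (0:ℝ) ≤ Real.sqrt (e ν t) * f ν t :=
        mul_nonneg (Real.sqrt_nonneg _) (hf_nonneg ν t)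
      positivity
    calc u ν * v ν = Real.sqrt (g ν * h ν) := (Real.sqrt_mul (hgnn ν) _).symm
      _ = Real.sqrt ((Real.exp (-2 * β * ((ν : ℝ) + 1) * t) * (2 : ℝ) ^ (-2 * (ν : ℝ) * θ)
            * (Real.sqrt (e ν t) * f ν t)) ^ 2) := by
          congr 1
          simp only [hg, hh]
          linear_combination -(Real.exp (-2 * β * ((ν : ℝ) + 1) * t)
            * (2 : ℝ) ^ (-2 * (ν : ℝ) * θ) * f ν t) ^ 2 * h1
      _ = _ := Real.sqrt_sq hnn
  -- pointwise bound on the termwise derivative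
  have key : ∀ ν : ℕ, deriv (fun s => Real.exp (-2 * β * ((ν : ℝ) + 1) * s)
        * (2 : ℝ) ^ (-2 * (ν : ℝ) * θ) * e ν s) t ≤ C₂ * (u ν * v ν) := by
    intro ν
    set c : ℝ := -2 * β * ((ν : ℝ) + 1) with hc
    set w : ℝ := (2 : ℝ) ^ (-2 * (ν : ℝ) * θ) with hw
    have h1 : HasDerivAt (fun s : ℝ => Real.exp (c * s)) (Real.exp (c * t) * (c * 1)) t :=
      ((hasDerivAt_id t).const_mul c).exp
    have hd : HasDerivAt (fun s => Real.exp (c * s) * w * e ν s)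
        (Real.exp (c * t) * (c * 1) * w * e ν t + Real.exp (c * t) * w * deriv (e ν) t) t :=
      (h1.mul_const w).mul ((he_diff ν t).hasDerivAt)
    rw [hd.deriv, huv ν]
    have hwpos : (0:ℝ) < w := by rw [hw]; positivity
    have hexp : (0:ℝ) < Real.exp (c * t) := Real.exp_pos _
    have hie := hineq ν t
    have hcle : c + C₁ * ((ν : ℝ) + 1) ≤ 0 := by
      have : (0:ℝ) ≤ (ν : ℝ) + 1 := by positivity
      nlinarith
    have hA : Real.exp (c * t) * w * deriv (e ν) t
        ≤ Real.exp (c * t) * w * (C₁ * ((ν : ℝ) + 1) * e ν t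
          + C₂ * Real.sqrt (e ν t) * f ν t) :=
      mul_le_mul_of_nonneg_left hie (mul_pos hexp hwpos).le
    have hB : (c + C₁ * ((ν : ℝ) + 1)) * (Real.exp (c * t) * w * e ν t) ≤ 0 :=
      mul_nonpos_of_nonpos_of_nonneg hcle (mul_nonneg (mul_pos hexp hwpos).le (he_nonneg ν t))
    nlinarith [hA, hB]
  -- summability of the product
  have hsuv : Summable (fun ν => u ν * v ν) := by
    apply Summable.of_nonneg_of_le
      (fun ν => mul_nonneg (Real.sqrt_nonneg _) (Real.sqrt_nonneg _))
      (fun ν => ?_) ((hsum.add hsumf).div_const 2)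
    have h1 := hu2 ν; have h2 := hv2 ν
    nlinarith [sq_nonneg (u ν - v ν)]
  have hsC : Summable (fun ν => C₂ * (u ν * v ν)) := hsuv.mul_left C₂
  -- put everything together
  rw [hE.deriv]
  calc ∑' ν : ℕ, deriv (fun s => Real.exp (-2 * β * ((ν : ℝ) + 1) * s)
        * (2 : ℝ) ^ (-2 * (ν : ℝ) * θ) * e ν s) t
      ≤ ∑' ν, C₂ * (u ν * v ν) := Summable.tsum_le_tsum key hsumd hsC
    _ = C₂ * ∑' ν, u ν * v ν := tsum_mul_left
    _ ≤ C₂ * (Real.sqrt (∑' ν, u ν ^ 2) * Real.sqrt (∑' ν, v ν ^ 2)) := by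
        refine mul_le_mul_of_nonneg_left ?_ hC₂
        refine tsum_mul_le_sqrt_mul_sqrt_aux u v (fun ν => Real.sqrt_nonneg _)
          (fun ν => Real.sqrt_nonneg _) ?_ ?_
        · simpa only [hu2] using hsum
        · simpa only [hv2] using hsumf
    _ = C₂ * Real.sqrt (∑' ν, g ν) * Real.sqrt (∑' ν, h ν) := by
        rw [tsum_congr hu2, tsum_congr hv2]; ring
end
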